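/- arXiv:math/0507310 — 2 statements merged into one kernel-verified Lean document; each statement's English description precedes it below -/
import Mathlib

section
/- For every v ∈ C¹_*(Σ̄;ℝ³) there exists a sequence v_n ∈ Aff^ET_li(Σ;ℝ³) such that v_n → v in L^p(Σ;ℝ³) and ∇v_n → ∇v in L^p(Σ;M^{3×2}) (i.e. v_n → v in W^{1,p}(Σ;ℝ³)). -/
open scoped ENNReal
open MeasureTheory Filter

noncomputable section

attribute [local instance] Matrix.normedAddCommGroup

/-- `juxt ξ ζ` is the 3×3 matrix whose first two columns are the columns of the 3×2 matrix `ξ`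
and whose third column is `ζ`, i.e. the matrix denoted `(ξ|ζ)` in the paper. -/
def juxt (ξ : Matrix (Fin 3) (Fin 2) ℝ) (ζ : Fin 3 → ℝ) : Matrix (Fin 3) (Fin 3) ℝ :=
  Matrix.of fun i k => Fin.lastCases (ζ i) (fun j => ξ i j) k

/-- `W0 W ξ = inf_{ζ ∈ ℝ³} W (ξ|ζ)`. -/
def W0 (W : Matrix (Fin 3) (Fin 3) ℝ → ℝ≥0∞) (ξ : Matrix (Fin 3) (Fin 2) ℝ) : ℝ≥0∞ :=
  ⨅ ζ : Fin 3 → ℝ, W (juxt ξ ζ)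

/-- The 3×2 Jacobian matrix `∇v(x)` of a map `v : ℝ² → ℝ³`. -/
def grad (v : (Fin 2 → ℝ) → (Fin 3 → ℝ)) (x : Fin 2 → ℝ) : Matrix (Fin 3) (Fin 2) ℝ :=
  Matrix.of fun i j => fderiv ℝ v x (Pi.single j 1) i

/-- `v ∈ C¹_*(Σ̄;ℝ³)`: `v` is (the restriction to `Σ̄` of) a `C¹` map from `ℝ²` to `ℝ³`
with `∂₁v(x) ∧ ∂₂v(x) ≠ 0` (cross product) for all `x ∈ Σ̄`. -/
def C1star (S : Set (Fin 2 → ℝ)) (v : (Fin 2 → ℝ) → (Fin 3 → ℝ)) : Prop :=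
  ContDiff ℝ 1 v ∧
    ∀ x ∈ closure S, crossProduct (fun i => grad v x i 0) (fun i => grad v x i 1) ≠ 0

/-- `v ∈ Aff^{ET}(Σ;ℝ³)` (Ekeland–Temam continuous piecewise affine functions): `v` is
continuous on `Σ` and there is a finite family of disjoint open subsets `V_i` of `Σ` with
`|Σ \ ∪ V_i| = 0` such that the restriction of `v` to each `V_i` is affine. -/
def IsAffET (S : Set (Fin 2 → ℝ)) (v : (Fin 2 → ℝ) → (Fin 3 → ℝ)) : Prop :=
  ContinuousOn v S ∧ ∃ (n : ℕ) (V : Fin n → Set (Fin 2 → ℝ)),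
    (∀ i, IsOpen (V i) ∧ V i ⊆ S) ∧
    Pairwise (Function.onFun Disjoint V) ∧
    volume (S \ ⋃ i, V i) = 0 ∧
    ∀ i, ∃ (ξ : Matrix (Fin 3) (Fin 2) ℝ) (a : Fin 3 → ℝ), ∀ x ∈ V i, v x = ξ.mulVec x + a

/-- `v` is locally injective on `S`. -/
def LocInjOn (S : Set (Fin 2 → ℝ)) (v : (Fin 2 → ℝ) → (Fin 3 → ℝ)) : Prop :=
  ∀ x ∈ S, ∃ ε : ℝ, 0 < ε ∧ Set.InjOn v (Metric.ball x ε ∩ S)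

set_option maxHeartbeats 1600000

namespace PA5

/-- minimum of the six linear functions defining the hat function -/
def mn6 (z : Fin 2 → ℝ) : ℝ :=
  min (1 - z 0) (min (1 + z 0) (min (1 - z 1) (min (1 + z 1) (min (1 - z 0 + z 1) (1 + z 0 - z 1)))))

/-- hat (nodal basis) function of the Kuhn triangulation of `ℝ²` with diagonals in direction
`(1,1)` -/
def hat (z : Fin 2 → ℝ) : ℝ := max 0 (mn6 z)

lemma mn6_le1 (z : Fin 2 → ℝ) : mn6 z ≤ 1 - z 0 := min_le_left _ _
lemma mn6_le2 (z : Fin 2 → ℝ) : mn6 z ≤ 1 + z 0 :=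
  le_trans (min_le_right _ _) (min_le_left _ _)
lemma mn6_le3 (z : Fin 2 → ℝ) : mn6 z ≤ 1 - z 1 :=
  le_trans (min_le_right _ _) (le_trans (min_le_right _ _) (min_le_left _ _))
lemma mn6_le4 (z : Fin 2 → ℝ) : mn6 z ≤ 1 + z 1 :=
  le_trans (min_le_right _ _) (le_trans (min_le_right _ _)
    (le_trans (min_le_right _ _) (min_le_left _ _)))
lemma mn6_le5 (z : Fin 2 → ℝ) : mn6 z ≤ 1 - z 0 + z 1 :=
  le_trans (min_le_right _ _) (le_trans (min_le_right _ _)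
    (le_trans (min_le_right _ _) (le_trans (min_le_right _ _) (min_le_left _ _))))
lemma mn6_le6 (z : Fin 2 → ℝ) : mn6 z ≤ 1 + z 0 - z 1 :=
  le_trans (min_le_right _ _) (le_trans (min_le_right _ _)
    (le_trans (min_le_right _ _) (le_trans (min_le_right _ _) (min_le_right _ _))))

lemma le_mn6 {z : Fin 2 → ℝ} {w : ℝ} (h1 : w ≤ 1 - z 0) (h2 : w ≤ 1 + z 0)
    (h3 : w ≤ 1 - z 1) (h4 : w ≤ 1 + z 1) (h5 : w ≤ 1 - z 0 + z 1) (h6 : w ≤ 1 + z 0 - z 1) :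
    w ≤ mn6 z :=
  le_min h1 (le_min h2 (le_min h3 (le_min h4 (le_min h5 h6))))

lemma hat_nonneg (z : Fin 2 → ℝ) : 0 ≤ hat z := le_max_left _ _

lemma hat_zero {z : Fin 2 → ℝ} (h : mn6 z ≤ 0) : hat z = 0 := max_eq_left h

lemma hat_eq_mn6 {z : Fin 2 → ℝ} (h : 0 ≤ mn6 z) : hat z = mn6 z := max_eq_right h

lemma continuous_hat : Continuous hat := by
  unfold hat mn6
  fun_prop

lemma hat_eval_lower (z : Fin 2 → ℝ) (s t : ℝ) (c1 c2 : ℤ)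
    (hz0 : z 0 = s - c1) (hz1 : z 1 = t - c2)
    (h0 : 0 < t) (hts : t < s) (hs1 : s < 1) :
    hat z = if c1 = 0 ∧ c2 = 0 then 1 - s else if c1 = 1 ∧ c2 = 0 then s - t
      else if c1 = 1 ∧ c2 = 1 then t else 0 := by
  have hc1 : c1 ≤ -1 ∨ c1 = 0 ∨ c1 = 1 ∨ 2 ≤ c1 := by omega
  rcases hc1 with h | h | h | h
  · have hr : (c1 : ℝ) ≤ -1 := by exact_mod_cast h
    rw [if_neg (by omega : ¬(c1 = 0 ∧ c2 = 0)), if_neg (by omega : ¬(c1 = 1 ∧ c2 = 0)),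
      if_neg (by omega : ¬(c1 = 1 ∧ c2 = 1))]
    exact hat_zero (le_trans (mn6_le1 z) (by rw [hz0]; linarith))
  · subst h
    have hc2 : c2 ≤ -1 ∨ c2 = 0 ∨ c2 = 1 ∨ 2 ≤ c2 := by omega
    rcases hc2 with g | g | g | g
    · have hr : (c2 : ℝ) ≤ -1 := by exact_mod_cast g
      rw [if_neg (by omega : ¬((0:ℤ) = 0 ∧ c2 = 0)), if_neg (by omega : ¬((0:ℤ) = 1 ∧ c2 = 0)),
        if_neg (by omega : ¬((0:ℤ) = 1 ∧ c2 = 1))]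
      exact hat_zero (le_trans (mn6_le3 z) (by rw [hz1]; linarith))
    · subst g
      rw [if_pos ⟨rfl, rfl⟩]
      have e0 : z 0 = s := by rw [hz0]; push_cast; ring
      have e1 : z 1 = t := by rw [hz1]; push_cast; ring
      have hmn : mn6 z = 1 - s := le_antisymm (by simpa [e0] using mn6_le1 z)
        (le_mn6 (by rw [e0]) (by rw [e0]; linarith) (by rw [e1]; linarith)
          (by rw [e1]; linarith) (by rw [e0, e1]; linarith) (by rw [e0, e1]; linarith))
      rw [hat_eq_mn6 (by rw [hmn]; linarith), hmn]
    · subst g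
      rw [if_neg (by omega : ¬((0:ℤ) = 0 ∧ (1:ℤ) = 0)), if_neg (by omega : ¬((0:ℤ) = 1 ∧ (1:ℤ) = 0)),
        if_neg (by omega : ¬((0:ℤ) = 1 ∧ (1:ℤ) = 1))]
      exact hat_zero (le_trans (mn6_le5 z) (by rw [hz0, hz1]; push_cast; linarith))
    · have hr : (2 : ℝ) ≤ c2 := by exact_mod_cast g
      rw [if_neg (by omega : ¬((0:ℤ) = 0 ∧ c2 = 0)), if_neg (by omega : ¬((0:ℤ) = 1 ∧ c2 = 0)),
        if_neg (by omega : ¬((0:ℤ) = 1 ∧ c2 = 1))]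
      exact hat_zero (le_trans (mn6_le4 z) (by rw [hz1]; linarith))
  · subst h
    have hc2 : c2 ≤ -1 ∨ c2 = 0 ∨ c2 = 1 ∨ 2 ≤ c2 := by omega
    have e0 : z 0 = s - 1 := by rw [hz0]; push_cast; ring
    rcases hc2 with g | g | g | g
    · have hr : (c2 : ℝ) ≤ -1 := by exact_mod_cast g
      rw [if_neg (by omega : ¬((1:ℤ) = 0 ∧ c2 = 0)), if_neg (by omega : ¬((1:ℤ) = 1 ∧ c2 = 0)),
        if_neg (by omega : ¬((1:ℤ) = 1 ∧ c2 = 1))]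
      exact hat_zero (le_trans (mn6_le3 z) (by rw [hz1]; linarith))
    · subst g
      rw [if_neg (by omega : ¬((1:ℤ) = 0 ∧ (0:ℤ) = 0)), if_pos ⟨rfl, rfl⟩]
      have e1 : z 1 = t := by rw [hz1]; push_cast; ring
      have hmn : mn6 z = s - t := le_antisymm (by simpa [e0, e1] using mn6_le6 z)
        (le_mn6 (by rw [e0]; linarith) (by rw [e0]; linarith) (by rw [e1]; linarith)
          (by rw [e1]; linarith) (by rw [e0, e1]; linarith) (by rw [e0, e1]; linarith))
      rw [hat_eq_mn6 (by rw [hmn]; linarith), hmn]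
    · subst g
      rw [if_neg (by omega : ¬((1:ℤ) = 0 ∧ (1:ℤ) = 0)), if_neg (by omega : ¬((1:ℤ) = 1 ∧ (1:ℤ) = 0)),
        if_pos ⟨rfl, rfl⟩]
      have e1 : z 1 = t - 1 := by rw [hz1]; push_cast; ring
      have hmn : mn6 z = t := le_antisymm
        (le_trans (mn6_le4 z) (by rw [e1]; linarith))
        (le_mn6 (by rw [e0]; linarith) (by rw [e0]; linarith) (by rw [e1]; linarith)
          (by rw [e1]; linarith) (by rw [e0, e1]; linarith) (by rw [e0, e1]; linarith))
      rw [hat_eq_mn6 (by rw [hmn]; linarith), hmn]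
    · have hr : (2 : ℝ) ≤ c2 := by exact_mod_cast g
      rw [if_neg (by omega : ¬((1:ℤ) = 0 ∧ c2 = 0)), if_neg (by omega : ¬((1:ℤ) = 1 ∧ c2 = 0)),
        if_neg (by omega : ¬((1:ℤ) = 1 ∧ c2 = 1))]
      exact hat_zero (le_trans (mn6_le4 z) (by rw [hz1]; linarith))
  · have hr : (2 : ℝ) ≤ c1 := by exact_mod_cast h
    rw [if_neg (by omega : ¬(c1 = 0 ∧ c2 = 0)), if_neg (by omega : ¬(c1 = 1 ∧ c2 = 0)),
      if_neg (by omega : ¬(c1 = 1 ∧ c2 = 1))]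
    exact hat_zero (le_trans (mn6_le2 z) (by rw [hz0]; linarith))

lemma hat_eval_upper (z : Fin 2 → ℝ) (s t : ℝ) (c1 c2 : ℤ)
    (hz0 : z 0 = s - c1) (hz1 : z 1 = t - c2)
    (h0 : 0 < s) (hts : s < t) (hs1 : t < 1) :
    hat z = if c1 = 0 ∧ c2 = 0 then 1 - t else if c1 = 0 ∧ c2 = 1 then t - s
      else if c1 = 1 ∧ c2 = 1 then s else 0 := by
  have hc2 : c2 ≤ -1 ∨ c2 = 0 ∨ c2 = 1 ∨ 2 ≤ c2 := by omega
  rcases hc2 with h | h | h | h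
  · have hr : (c2 : ℝ) ≤ -1 := by exact_mod_cast h
    rw [if_neg (by omega : ¬(c1 = 0 ∧ c2 = 0)), if_neg (by omega : ¬(c1 = 0 ∧ c2 = 1)),
      if_neg (by omega : ¬(c1 = 1 ∧ c2 = 1))]
    exact hat_zero (le_trans (mn6_le3 z) (by rw [hz1]; linarith))
  · subst h
    have hc1 : c1 ≤ -1 ∨ c1 = 0 ∨ c1 = 1 ∨ 2 ≤ c1 := by omega
    rcases hc1 with g | g | g | g
    · have hr : (c1 : ℝ) ≤ -1 := by exact_mod_cast g
      rw [if_neg (by omega : ¬(c1 = 0 ∧ (0:ℤ) = 0)), if_neg (by omega : ¬(c1 = 0 ∧ (0:ℤ) = 1)),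
        if_neg (by omega : ¬(c1 = 1 ∧ (0:ℤ) = 1))]
      exact hat_zero (le_trans (mn6_le1 z) (by rw [hz0]; linarith))
    · subst g
      rw [if_pos ⟨rfl, rfl⟩]
      have e0 : z 0 = s := by rw [hz0]; push_cast; ring
      have e1 : z 1 = t := by rw [hz1]; push_cast; ring
      have hmn : mn6 z = 1 - t := le_antisymm (by simpa [e1] using mn6_le3 z)
        (le_mn6 (by rw [e0]; linarith) (by rw [e0]; linarith) (by rw [e1])
          (by rw [e1]; linarith) (by rw [e0, e1]; linarith) (by rw [e0, e1]; linarith))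
      rw [hat_eq_mn6 (by rw [hmn]; linarith), hmn]
    · subst g
      rw [if_neg (by omega : ¬((1:ℤ) = 0 ∧ (0:ℤ) = 0)), if_neg (by omega : ¬((1:ℤ) = 0 ∧ (0:ℤ) = 1)),
        if_neg (by omega : ¬((1:ℤ) = 1 ∧ (0:ℤ) = 1))]
      exact hat_zero (le_trans (mn6_le6 z) (by rw [hz0, hz1]; push_cast; linarith))
    · have hr : (2 : ℝ) ≤ c1 := by exact_mod_cast g
      rw [if_neg (by omega : ¬(c1 = 0 ∧ (0:ℤ) = 0)), if_neg (by omega : ¬(c1 = 0 ∧ (0:ℤ) = 1)),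
        if_neg (by omega : ¬(c1 = 1 ∧ (0:ℤ) = 1))]
      exact hat_zero (le_trans (mn6_le2 z) (by rw [hz0]; linarith))
  · subst h
    have hc1 : c1 ≤ -1 ∨ c1 = 0 ∨ c1 = 1 ∨ 2 ≤ c1 := by omega
    have e1 : z 1 = t - 1 := by rw [hz1]; push_cast; ring
    rcases hc1 with g | g | g | g
    · have hr : (c1 : ℝ) ≤ -1 := by exact_mod_cast g
      rw [if_neg (by omega : ¬(c1 = 0 ∧ (1:ℤ) = 0)), if_neg (by omega : ¬(c1 = 0 ∧ (1:ℤ) = 1)),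
        if_neg (by omega : ¬(c1 = 1 ∧ (1:ℤ) = 1))]
      exact hat_zero (le_trans (mn6_le1 z) (by rw [hz0]; linarith))
    · subst g
      rw [if_neg (by omega : ¬((0:ℤ) = 0 ∧ (1:ℤ) = 0)), if_pos ⟨rfl, rfl⟩]
      have e0 : z 0 = s := by rw [hz0]; push_cast; ring
      have hmn : mn6 z = t - s := le_antisymm (by simpa [e0, e1] using mn6_le5 z)
        (le_mn6 (by rw [e0]; linarith) (by rw [e0]; linarith) (by rw [e1]; linarith)
          (by rw [e1]; linarith) (by rw [e0, e1]; linarith) (by rw [e0, e1]; linarith))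
      rw [hat_eq_mn6 (by rw [hmn]; linarith), hmn]
    · subst g
      rw [if_neg (by omega : ¬((1:ℤ) = 0 ∧ (1:ℤ) = 0)), if_neg (by omega : ¬((1:ℤ) = 0 ∧ (1:ℤ) = 1)),
        if_pos ⟨rfl, rfl⟩]
      have e0 : z 0 = s - 1 := by rw [hz0]; push_cast; ring
      have hmn : mn6 z = s := le_antisymm
        (le_trans (mn6_le2 z) (by rw [e0]; linarith))
        (le_mn6 (by rw [e0]; linarith) (by rw [e0]; linarith) (by rw [e1]; linarith)
          (by rw [e1]; linarith) (by rw [e0, e1]; linarith) (by rw [e0, e1]; linarith))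
      rw [hat_eq_mn6 (by rw [hmn]; linarith), hmn]
    · have hr : (2 : ℝ) ≤ c1 := by exact_mod_cast g
      rw [if_neg (by omega : ¬(c1 = 0 ∧ (1:ℤ) = 0)), if_neg (by omega : ¬(c1 = 0 ∧ (1:ℤ) = 1)),
        if_neg (by omega : ¬(c1 = 1 ∧ (1:ℤ) = 1))]
      exact hat_zero (le_trans (mn6_le2 z) (by rw [hz0]; linarith))
  · have hr : (2 : ℝ) ≤ c2 := by exact_mod_cast h
    rw [if_neg (by omega : ¬(c1 = 0 ∧ c2 = 0)), if_neg (by omega : ¬(c1 = 0 ∧ c2 = 1)),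
      if_neg (by omega : ¬(c1 = 1 ∧ c2 = 1))]
    exact hat_zero (le_trans (mn6_le4 z) (by rw [hz1]; linarith))

/-- lattice point as an element of `ℝ²` -/
def latC (k : ℤ × ℤ) : Fin 2 → ℝ := fun i => if i = 0 then (k.1 : ℝ) else (k.2 : ℝ)

@[simp] lemma latC0 (k : ℤ × ℤ) : latC k 0 = (k.1 : ℝ) := rfl
@[simp] lemma latC1 (k : ℤ × ℤ) : latC k 1 = (k.2 : ℝ) := rfl

/-- the piecewise affine interpolant of `v` on the Kuhn mesh of size `h`, using nodes in `F` -/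
def interp (v : (Fin 2 → ℝ) → Fin 3 → ℝ) (h : ℝ) (F : Finset (ℤ × ℤ)) :
    (Fin 2 → ℝ) → Fin 3 → ℝ :=
  fun x => ∑ k ∈ F, hat (fun i => x i / h - latC k i) • v (h • latC k)

lemma continuous_interp (v : (Fin 2 → ℝ) → Fin 3 → ℝ) (h : ℝ) (F : Finset (ℤ × ℤ)) :
    Continuous (interp v h F) := by
  refine continuous_finset_sum _ fun k _ => ?_
  refine Continuous.smul (f := fun x : Fin 2 → ℝ => hat (fun i => x i / h - latC k i)) ?_ continuous_const
  refine continuous_hat.comp ?_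
  exact continuous_pi fun i => by fun_prop

/-- open triangle of the mesh; `σ = false` is the lower triangle `0 < t < s < 1`. -/
def oCell (h : ℝ) (m : ℤ × ℤ) (σ : Bool) : Set (Fin 2 → ℝ) :=
  if σ then {x | 0 < x 0 / h - m.1 ∧ x 0 / h - m.1 < x 1 / h - m.2 ∧ x 1 / h - m.2 < 1}
  else {x | 0 < x 1 / h - m.2 ∧ x 1 / h - m.2 < x 0 / h - m.1 ∧ x 0 / h - m.1 < 1}

def cCell (h : ℝ) (m : ℤ × ℤ) (σ : Bool) : Set (Fin 2 → ℝ) :=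
  if σ then {x | 0 ≤ x 0 / h - m.1 ∧ x 0 / h - m.1 ≤ x 1 / h - m.2 ∧ x 1 / h - m.2 ≤ 1}
  else {x | 0 ≤ x 1 / h - m.2 ∧ x 1 / h - m.2 ≤ x 0 / h - m.1 ∧ x 0 / h - m.1 ≤ 1}

lemma isOpen_oCell (h : ℝ) (m : ℤ × ℤ) (σ : Bool) : IsOpen (oCell h m σ) := by
  have c0 : Continuous fun x : Fin 2 → ℝ => x 0 / h - (m.1 : ℝ) := by
    fun_prop
  have c1 : Continuous fun x : Fin 2 → ℝ => x 1 / h - (m.2 : ℝ) := by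
    fun_prop
  have o1 : IsOpen {x : Fin 2 → ℝ | 0 < x 1 / h - (m.2 : ℝ)} := isOpen_lt continuous_const c1
  have o1' : IsOpen {x : Fin 2 → ℝ | 0 < x 0 / h - (m.1 : ℝ)} := isOpen_lt continuous_const c0
  have o2 : IsOpen {x : Fin 2 → ℝ | x 1 / h - (m.2 : ℝ) < x 0 / h - (m.1 : ℝ)} :=
    isOpen_lt c1 c0
  have o2' : IsOpen {x : Fin 2 → ℝ | x 0 / h - (m.1 : ℝ) < x 1 / h - (m.2 : ℝ)} :=
    isOpen_lt c0 c1
  have o3 : IsOpen {x : Fin 2 → ℝ | x 0 / h - (m.1 : ℝ) < 1} := isOpen_lt c0 continuous_const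
  have o3' : IsOpen {x : Fin 2 → ℝ | x 1 / h - (m.2 : ℝ) < 1} := isOpen_lt c1 continuous_const
  cases σ
  · have : oCell h m false = {x : Fin 2 → ℝ | 0 < x 1 / h - (m.2 : ℝ)} ∩
        ({x : Fin 2 → ℝ | x 1 / h - (m.2 : ℝ) < x 0 / h - (m.1 : ℝ)} ∩
          {x : Fin 2 → ℝ | x 0 / h - (m.1 : ℝ) < 1}) := by
      ext x; simp only [oCell, if_false, Bool.false_eq_true, Set.mem_setOf_eq, Set.mem_inter_iff]
    rw [this]; exact o1.inter (o2.inter o3)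
  · have : oCell h m true = {x : Fin 2 → ℝ | 0 < x 0 / h - (m.1 : ℝ)} ∩
        ({x : Fin 2 → ℝ | x 0 / h - (m.1 : ℝ) < x 1 / h - (m.2 : ℝ)} ∩
          {x : Fin 2 → ℝ | x 1 / h - (m.2 : ℝ) < 1}) := by
      ext x; simp only [oCell, if_true, Set.mem_setOf_eq, Set.mem_inter_iff]
    rw [this]; exact o1'.inter (o2'.inter o3')

lemma oCell_subset_cCell (h : ℝ) (m : ℤ × ℤ) (σ : Bool) : oCell h m σ ⊆ cCell h m σ := by
  cases σ <;> intro x hx <;> simp only [oCell, cCell, Set.mem_setOf_eq, if_true, if_false,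
    Bool.false_eq_true] at hx ⊢ <;>
    exact ⟨hx.1.le, hx.2.1.le, hx.2.2.le⟩

lemma convex_cCell (h : ℝ) (m : ℤ × ℤ) (σ : Bool) : Convex ℝ (cCell h m σ) := by
  have l0 : IsLinearMap ℝ fun x : Fin 2 → ℝ => x 0 / h :=
    ⟨fun a b => by simp [add_div], fun c a => by
      simp [Pi.smul_apply, smul_eq_mul, mul_div_assoc]⟩
  have l1 : IsLinearMap ℝ fun x : Fin 2 → ℝ => x 1 / h :=
    ⟨fun a b => by simp [add_div], fun c a => by
      simp [Pi.smul_apply, smul_eq_mul, mul_div_assoc]⟩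
  have l01 : IsLinearMap ℝ fun x : Fin 2 → ℝ => x 0 / h - x 1 / h :=
    ⟨fun a b => by simp [add_div]; ring, fun c a => by
      simp [Pi.smul_apply, smul_eq_mul, mul_div_assoc]; ring⟩
  have l10 : IsLinearMap ℝ fun x : Fin 2 → ℝ => x 1 / h - x 0 / h :=
    ⟨fun a b => by simp [add_div]; ring, fun c a => by
      simp [Pi.smul_apply, smul_eq_mul, mul_div_assoc]; ring⟩
  cases σ
  · have : cCell h m false = {x : Fin 2 → ℝ | (m.2 : ℝ) ≤ x 1 / h} ∩
        ({x : Fin 2 → ℝ | x 1 / h - x 0 / h ≤ (m.2 : ℝ) - m.1} ∩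
          {x : Fin 2 → ℝ | x 0 / h ≤ (m.1 : ℝ) + 1}) := by
      ext x
      simp only [cCell, if_false, Bool.false_eq_true, Set.mem_setOf_eq, Set.mem_inter_iff]
      constructor
      · rintro ⟨a, b, c⟩; exact ⟨by linarith, by linarith, by linarith⟩
      · rintro ⟨a, b, c⟩; exact ⟨by linarith, by linarith, by linarith⟩
    rw [this]
    exact (convex_halfSpace_ge l1 _).inter
      ((convex_halfSpace_le l10 _).inter (convex_halfSpace_le l0 _))
  · have : cCell h m true = {x : Fin 2 → ℝ | (m.1 : ℝ) ≤ x 0 / h} ∩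
        ({x : Fin 2 → ℝ | x 0 / h - x 1 / h ≤ (m.1 : ℝ) - m.2} ∩
          {x : Fin 2 → ℝ | x 1 / h ≤ (m.2 : ℝ) + 1}) := by
      ext x
      simp only [cCell, if_true, Set.mem_setOf_eq, Set.mem_inter_iff]
      constructor
      · rintro ⟨a, b, c⟩; exact ⟨by linarith, by linarith, by linarith⟩
      · rintro ⟨a, b, c⟩; exact ⟨by linarith, by linarith, by linarith⟩
    rw [this]
    exact (convex_halfSpace_ge l0 _).inter
      ((convex_halfSpace_le l01 _).inter (convex_halfSpace_le l1 _))

lemma cCell_coord {h : ℝ} (hh : 0 < h) {m : ℤ × ℤ} {σ : Bool} {x : Fin 2 → ℝ}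
    (hx : x ∈ cCell h m σ) :
    (m.1 : ℝ) * h ≤ x 0 ∧ x 0 ≤ ((m.1 : ℝ) + 1) * h ∧
      (m.2 : ℝ) * h ≤ x 1 ∧ x 1 ≤ ((m.2 : ℝ) + 1) * h := by
  have key : (m.1 : ℝ) ≤ x 0 / h ∧ x 0 / h ≤ (m.1 : ℝ) + 1 ∧
      (m.2 : ℝ) ≤ x 1 / h ∧ x 1 / h ≤ (m.2 : ℝ) + 1 := by
    cases σ <;>
      simp only [cCell, Set.mem_setOf_eq, if_true, if_false, Bool.false_eq_true] at hx <;>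
      obtain ⟨a, b, c⟩ := hx <;>
      exact ⟨by linarith, by linarith, by linarith, by linarith⟩
  obtain ⟨k1, k2, k3, k4⟩ := key
  exact ⟨(le_div_iff₀ hh).mp k1, (div_le_iff₀ hh).mp k2,
    (le_div_iff₀ hh).mp k3, (div_le_iff₀ hh).mp k4⟩

lemma cCell_st01 {h : ℝ} (hh : 0 < h) {m : ℤ × ℤ} {σ : Bool} {x : Fin 2 → ℝ}
    (hx : x ∈ cCell h m σ) :
    0 ≤ x 0 / h - m.1 ∧ x 0 / h - m.1 ≤ 1 ∧ 0 ≤ x 1 / h - m.2 ∧ x 1 / h - m.2 ≤ 1 := by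
  cases σ <;>
    simp only [cCell, Set.mem_setOf_eq, if_true, if_false, Bool.false_eq_true] at hx <;>
    obtain ⟨a, b, c⟩ := hx <;>
    exact ⟨by linarith, by linarith, by linarith, by linarith⟩

lemma cCell_dist {h : ℝ} (hh : 0 < h) {m : ℤ × ℤ} {σ : Bool} {a b : Fin 2 → ℝ}
    (ha : a ∈ cCell h m σ) (hb : b ∈ cCell h m σ) : ‖a - b‖ ≤ h := by
  obtain ⟨a1, a2, a3, a4⟩ := cCell_coord hh ha
  obtain ⟨b1, b2, b3, b4⟩ := cCell_coord hh hb
  rw [pi_norm_le_iff_of_nonneg hh.le]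
  have h0 : |a 0 - b 0| ≤ h := abs_le.2 ⟨by linarith, by linarith⟩
  have h1 : |a 1 - b 1| ≤ h := abs_le.2 ⟨by linarith, by linarith⟩
  intro i
  fin_cases i
  · simpa using h0
  · simpa using h1

lemma oCell_st {h : ℝ} {m : ℤ × ℤ} {σ : Bool} {x : Fin 2 → ℝ} (hx : x ∈ oCell h m σ) :
    (m.1 : ℝ) < x 0 / h ∧ x 0 / h < m.1 + 1 ∧ (m.2 : ℝ) < x 1 / h ∧ x 1 / h < m.2 + 1 := by
  cases σ <;>
    simp only [oCell, Set.mem_setOf_eq, if_true, if_false, Bool.false_eq_true] at hx <;>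
    obtain ⟨a, b, c⟩ := hx <;>
    exact ⟨by linarith, by linarith, by linarith, by linarith⟩

lemma oCell_eq {h : ℝ} {m m' : ℤ × ℤ} {σ σ' : Bool} {x : Fin 2 → ℝ}
    (hx : x ∈ oCell h m σ) (hx' : x ∈ oCell h m' σ') : m = m' ∧ σ = σ' := by
  obtain ⟨p1, p2, p3, p4⟩ := oCell_st hx
  obtain ⟨q1, q2, q3, q4⟩ := oCell_st hx'
  have a1 : ⌊x 0 / h⌋ = m.1 := Int.floor_eq_iff.2 ⟨p1.le, by exact_mod_cast p2⟩
  have a2 : ⌊x 0 / h⌋ = m'.1 := Int.floor_eq_iff.2 ⟨q1.le, by exact_mod_cast q2⟩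
  have b1 : ⌊x 1 / h⌋ = m.2 := Int.floor_eq_iff.2 ⟨p3.le, by exact_mod_cast p4⟩
  have b2 : ⌊x 1 / h⌋ = m'.2 := Int.floor_eq_iff.2 ⟨q3.le, by exact_mod_cast q4⟩
  have hm : m = m' := Prod.ext (by omega) (by omega)
  subst hm
  refine ⟨rfl, ?_⟩
  cases σ <;> cases σ' <;> try rfl
  all_goals
    simp only [oCell, Set.mem_setOf_eq, if_true, if_false, Bool.false_eq_true] at hx hx'
  · exfalso; linarith [hx.2.1, hx'.2.1]
  · exfalso; linarith [hx.2.1, hx'.2.1]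

lemma cCell_subset_closure {h : ℝ} (hh : 0 < h) (m : ℤ × ℤ) (σ : Bool) :
    cCell h m σ ⊆ closure (oCell h m σ) := by
  intro x hx
  set a : ℝ := if σ then 1/3 else 2/3 with ha
  set b : ℝ := if σ then 2/3 else 1/3 with hb
  set w0 : Fin 2 → ℝ := fun i => if i = 0 then h * (m.1 + a) else h * (m.2 + b) with hw0
  have hw00 : w0 0 = h * (m.1 + a) := rfl
  have hw01 : w0 1 = h * (m.2 + b) := rfl
  have key : ∀ θ : ℝ, 0 < θ → θ ≤ 1 → x + θ • (w0 - x) ∈ oCell h m σ := by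
    intro θ hθ0 hθ1
    have e0 : (x + θ • (w0 - x)) 0 / h - (m.1 : ℝ) =
        (1 - θ) * (x 0 / h - m.1) + θ * a := by
      simp only [Pi.add_apply, Pi.smul_apply, Pi.sub_apply, smul_eq_mul, hw00]
      field_simp
      ring
    have e1 : (x + θ • (w0 - x)) 1 / h - (m.2 : ℝ) =
        (1 - θ) * (x 1 / h - m.2) + θ * b := by
      simp only [Pi.add_apply, Pi.smul_apply, Pi.sub_apply, smul_eq_mul, hw01]
      field_simp
      ring
    cases σ <;>
      simp only [oCell, cCell, Set.mem_setOf_eq, if_true, if_false, Bool.false_eq_true] at hx ⊢ <;>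
      rw [e0, e1] <;>
      simp only [ha, hb, if_true, if_false, Bool.false_eq_true] <;>
      refine ⟨by nlinarith [hx.1, hx.2.1, hx.2.2], by nlinarith [hx.1, hx.2.1, hx.2.2],
        by nlinarith [hx.1, hx.2.1, hx.2.2]⟩
  have htend : Tendsto (fun n : ℕ => x + (1 / (n + 1 : ℝ)) • (w0 - x)) atTop (nhds x) := by
    have h1 : Tendsto (fun n : ℕ => (1 / (n + 1 : ℝ)) • (w0 - x)) atTop
        (nhds ((0 : ℝ) • (w0 - x))) :=
      tendsto_one_div_add_atTop_nhds_zero_nat.smul_const _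
    have h2 := (tendsto_const_nhds (x := x) (f := atTop)).add h1
    simpa using h2
  exact mem_closure_of_tendsto htend (Filter.Eventually.of_forall fun n =>
    key _ (by positivity) (by rw [div_le_one (by positivity)]; linarith [Nat.cast_nonneg (α := ℝ) n]))

lemma mem_cCell_floor {h : ℝ} (x : Fin 2 → ℝ) :
    ∃ σ, x ∈ cCell h (⌊x 0 / h⌋, ⌊x 1 / h⌋) σ := by
  have f1 := Int.floor_le (x 0 / h)
  have f2 := (Int.lt_floor_add_one (x 0 / h)).le
  have f3 := Int.floor_le (x 1 / h)
  have f4 := (Int.lt_floor_add_one (x 1 / h)).le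
  rcases le_total (x 1 / h - (⌊x 1 / h⌋ : ℝ)) (x 0 / h - (⌊x 0 / h⌋ : ℝ)) with hle | hle
  · exact ⟨false, by
      simp only [cCell, Set.mem_setOf_eq, if_false, Bool.false_eq_true]
      exact ⟨by linarith, by linarith, by linarith⟩⟩
  · exact ⟨true, by
      simp only [cCell, Set.mem_setOf_eq, if_true]
      exact ⟨by linarith, by linarith, by linarith⟩⟩

lemma mem_oCell_floor {h : ℝ} (hh : 0 < h) (x : Fin 2 → ℝ)
    (h1 : ∀ k : ℤ, x 0 ≠ h * k) (h2 : ∀ k : ℤ, x 1 ≠ h * k)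
    (h3 : ∀ k : ℤ, x 0 - x 1 ≠ h * k) :
    ∃ σ, x ∈ oCell h (⌊x 0 / h⌋, ⌊x 1 / h⌋) σ := by
  have f1 := Int.floor_le (x 0 / h)
  have f2 := Int.lt_floor_add_one (x 0 / h)
  have f3 := Int.floor_le (x 1 / h)
  have f4 := Int.lt_floor_add_one (x 1 / h)
  have g1 : (⌊x 0 / h⌋ : ℝ) < x 0 / h := by
    rcases lt_or_eq_of_le f1 with e | e
    · exact e
    · exact absurd (by field_simp at e ⊢; linarith : x 0 = h * (⌊x 0 / h⌋ : ℤ)) (h1 _)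
  have g2 : (⌊x 1 / h⌋ : ℝ) < x 1 / h := by
    rcases lt_or_eq_of_le f3 with e | e
    · exact e
    · exact absurd (by field_simp at e ⊢; linarith : x 1 = h * (⌊x 1 / h⌋ : ℤ)) (h2 _)
  have g3 : x 0 / h - (⌊x 0 / h⌋ : ℝ) ≠ x 1 / h - (⌊x 1 / h⌋ : ℝ) := by
    intro e
    refine h3 (⌊x 0 / h⌋ - ⌊x 1 / h⌋) ?_
    have : x 0 / h - x 1 / h = ((⌊x 0 / h⌋ - ⌊x 1 / h⌋ : ℤ) : ℝ) := by push_cast; linarith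
    field_simp at this
    push_cast at this ⊢
    linarith
  rcases lt_or_gt_of_ne g3 with hlt | hgt
  · exact ⟨true, by
      simp only [oCell, Set.mem_setOf_eq, if_true]
      exact ⟨by linarith, by linarith, by linarith⟩⟩
  · exact ⟨false, by
      simp only [oCell, Set.mem_setOf_eq, if_false, Bool.false_eq_true]
      exact ⟨by linarith, by linarith, by linarith⟩⟩

lemma interp_eq_lower (v : (Fin 2 → ℝ) → Fin 3 → ℝ) {h : ℝ} (hh : 0 < h)
    (F : Finset (ℤ × ℤ)) (m : ℤ × ℤ) (hm1 : m ∈ F) (hm2 : (m.1 + 1, m.2) ∈ F)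
    (hm3 : (m.1 + 1, m.2 + 1) ∈ F) {x : Fin 2 → ℝ} (hx : x ∈ oCell h m false) :
    interp v h F x = v (h • latC m)
      + (x 0 / h - m.1) • (v (h • latC (m.1 + 1, m.2)) - v (h • latC m))
      + (x 1 / h - m.2) • (v (h • latC (m.1 + 1, m.2 + 1)) - v (h • latC (m.1 + 1, m.2))) := by
  classical
  simp only [oCell, Set.mem_setOf_eq, if_false, Bool.false_eq_true] at hx
  obtain ⟨ht0, hts, hs1⟩ := hx
  have hne12 : m ≠ (m.1 + 1, m.2) := by
    intro e; have : m.1 = m.1 + 1 := congrArg Prod.fst e; omega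
  have hne13 : m ≠ (m.1 + 1, m.2 + 1) := by
    intro e; have : m.1 = m.1 + 1 := congrArg Prod.fst e; omega
  have hne23 : (m.1 + 1, m.2) ≠ (m.1 + 1, m.2 + 1) := by
    intro e; have : m.2 = m.2 + 1 := congrArg Prod.snd e; omega
  have hTsub : ({m, (m.1 + 1, m.2), (m.1 + 1, m.2 + 1)} : Finset (ℤ × ℤ)) ⊆ F := by
    intro k hk
    simp only [Finset.mem_insert, Finset.mem_singleton] at hk
    rcases hk with rfl | rfl | rfl <;> assumption
  have hzero : ∀ k ∈ F, k ∉ ({m, (m.1 + 1, m.2), (m.1 + 1, m.2 + 1)} : Finset (ℤ × ℤ)) →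
      hat (fun i => x i / h - latC k i) • v (h • latC k) = 0 := by
    intro k _ hk
    simp only [Finset.mem_insert, Finset.mem_singleton, not_or, Prod.ext_iff] at hk
    rw [hat_eval_lower (fun i => x i / h - latC k i) (x 0 / h - m.1) (x 1 / h - m.2)
      (k.1 - m.1) (k.2 - m.2) (by simp <;> push_cast <;> ring) (by simp <;> push_cast <;> ring)
      ht0 hts hs1]
    rw [if_neg (by omega), if_neg (by omega), if_neg (by omega), zero_smul]
  rw [show interp v h F x = ∑ k ∈ F, hat (fun i => x i / h - latC k i) • v (h • latC k) from rfl,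
    ← Finset.sum_subset hTsub hzero]
  rw [Finset.sum_insert (by simp only [Finset.mem_insert, Finset.mem_singleton]; tauto),
    Finset.sum_insert (by simp only [Finset.mem_singleton]; tauto), Finset.sum_singleton]
  rw [hat_eval_lower (fun i => x i / h - latC m i) (x 0 / h - m.1) (x 1 / h - m.2) 0 0
      (by simp) (by simp) ht0 hts hs1,
    hat_eval_lower (fun i => x i / h - latC (m.1 + 1, m.2) i) (x 0 / h - m.1) (x 1 / h - m.2) 1 0
      (by simp <;> push_cast <;> ring) (by simp) ht0 hts hs1,
    hat_eval_lower (fun i => x i / h - latC (m.1 + 1, m.2 + 1) i) (x 0 / h - m.1) (x 1 / h - m.2)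
      1 1 (by simp <;> push_cast <;> ring) (by simp <;> push_cast <;> ring) ht0 hts hs1]
  norm_num
  funext i
  simp only [Pi.add_apply, Pi.sub_apply, Pi.smul_apply, smul_eq_mul]
  ring

lemma interp_eq_upper (v : (Fin 2 → ℝ) → Fin 3 → ℝ) {h : ℝ} (hh : 0 < h)
    (F : Finset (ℤ × ℤ)) (m : ℤ × ℤ) (hm1 : m ∈ F) (hm2 : (m.1, m.2 + 1) ∈ F)
    (hm3 : (m.1 + 1, m.2 + 1) ∈ F) {x : Fin 2 → ℝ} (hx : x ∈ oCell h m true) :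
    interp v h F x = v (h • latC m)
      + (x 1 / h - m.2) • (v (h • latC (m.1, m.2 + 1)) - v (h • latC m))
      + (x 0 / h - m.1) • (v (h • latC (m.1 + 1, m.2 + 1)) - v (h • latC (m.1, m.2 + 1))) := by
  classical
  simp only [oCell, Set.mem_setOf_eq, if_true] at hx
  obtain ⟨hs0, hst, ht1⟩ := hx
  have hne12 : m ≠ (m.1, m.2 + 1) := by
    intro e; have : m.2 = m.2 + 1 := congrArg Prod.snd e; omega
  have hne13 : m ≠ (m.1 + 1, m.2 + 1) := by
    intro e; have : m.1 = m.1 + 1 := congrArg Prod.fst e; omega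
  have hne23 : (m.1, m.2 + 1) ≠ (m.1 + 1, m.2 + 1) := by
    intro e; have : m.1 = m.1 + 1 := congrArg Prod.fst e; omega
  have hTsub : ({m, (m.1, m.2 + 1), (m.1 + 1, m.2 + 1)} : Finset (ℤ × ℤ)) ⊆ F := by
    intro k hk
    simp only [Finset.mem_insert, Finset.mem_singleton] at hk
    rcases hk with rfl | rfl | rfl <;> assumption
  have hzero : ∀ k ∈ F, k ∉ ({m, (m.1, m.2 + 1), (m.1 + 1, m.2 + 1)} : Finset (ℤ × ℤ)) →
      hat (fun i => x i / h - latC k i) • v (h • latC k) = 0 := by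
    intro k _ hk
    simp only [Finset.mem_insert, Finset.mem_singleton, not_or, Prod.ext_iff] at hk
    rw [hat_eval_upper (fun i => x i / h - latC k i) (x 0 / h - m.1) (x 1 / h - m.2)
      (k.1 - m.1) (k.2 - m.2) (by simp <;> push_cast <;> ring) (by simp <;> push_cast <;> ring)
      hs0 hst ht1]
    rw [if_neg (by omega), if_neg (by omega), if_neg (by omega), zero_smul]
  rw [show interp v h F x = ∑ k ∈ F, hat (fun i => x i / h - latC k i) • v (h • latC k) from rfl,
    ← Finset.sum_subset hTsub hzero]
  rw [Finset.sum_insert (by simp only [Finset.mem_insert, Finset.mem_singleton]; tauto),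
    Finset.sum_insert (by simp only [Finset.mem_singleton]; tauto), Finset.sum_singleton]
  rw [hat_eval_upper (fun i => x i / h - latC m i) (x 0 / h - m.1) (x 1 / h - m.2) 0 0
      (by simp) (by simp) hs0 hst ht1,
    hat_eval_upper (fun i => x i / h - latC (m.1, m.2 + 1) i) (x 0 / h - m.1) (x 1 / h - m.2) 0 1
      (by simp) (by simp <;> push_cast <;> ring) hs0 hst ht1,
    hat_eval_upper (fun i => x i / h - latC (m.1 + 1, m.2 + 1) i) (x 0 / h - m.1) (x 1 / h - m.2)
      1 1 (by simp <;> push_cast <;> ring) (by simp <;> push_cast <;> ring) hs0 hst ht1]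
  norm_num
  funext i
  simp only [Pi.add_apply, Pi.sub_apply, Pi.smul_apply, smul_eq_mul]
  ring

/-- the affine map appearing on a cell, in `mulVec` form -/
lemma affine_form {h : ℝ} (hh : 0 < h) (c₀ d₁ d₂ : Fin 3 → ℝ) (m1 m2 : ℝ) :
    ∃ (Ξ : Matrix (Fin 3) (Fin 2) ℝ) (a : Fin 3 → ℝ),
      (∀ x : Fin 2 → ℝ,
        c₀ + (x 0 / h - m1) • d₁ + (x 1 / h - m2) • d₂ = Ξ.mulVec x + a) ∧
      (∀ i j, Ξ i j = if j = 0 then d₁ i / h else d₂ i / h) := by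
  refine ⟨Matrix.of fun i j => if j = 0 then d₁ i / h else d₂ i / h,
    c₀ - m1 • d₁ - m2 • d₂, fun x => ?_, fun i j => rfl⟩
  funext i
  simp only [Pi.add_apply, Pi.sub_apply, Pi.smul_apply, smul_eq_mul, Matrix.mulVec,
    dotProduct, Fin.sum_univ_two, Matrix.of_apply, if_pos rfl]
  norm_num
  field_simp
  ring

lemma grad_aff (Ξ : Matrix (Fin 3) (Fin 2) ℝ) (a : Fin 3 → ℝ) (x : Fin 2 → ℝ) :
    grad (fun w => Ξ.mulVec w + a) x = Ξ := by
  have hmv : Ξ.mulVec = ⇑((Matrix.mulVecLin Ξ).toContinuousLinearMap) := by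
    rw [LinearMap.coe_toContinuousLinearMap']
    ext w i
    rw [Matrix.mulVecLin_apply]
  have h1 : fderiv ℝ (fun w => Ξ.mulVec w + a) x = (Matrix.mulVecLin Ξ).toContinuousLinearMap := by
    have e : (fun w : Fin 2 → ℝ => Ξ.mulVec w + a)
        = fun w => (Matrix.mulVecLin Ξ).toContinuousLinearMap w + a := by
      funext w; rw [hmv]
    rw [e, fderiv_add_const, ContinuousLinearMap.fderiv]
  show Matrix.of (fun i j => fderiv ℝ (fun w => Ξ.mulVec w + a) x (Pi.single j 1) i) = Ξ
  ext i j
  rw [Matrix.of_apply, h1]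
  have e2 : ((Matrix.mulVecLin Ξ).toContinuousLinearMap) (Pi.single j 1)
      = Ξ.mulVec (Pi.single j 1) := by
    rw [← hmv]
  rw [e2, Matrix.mulVec_single]
  simp

lemma grad_congr {f g : (Fin 2 → ℝ) → Fin 3 → ℝ} {x : Fin 2 → ℝ} (h : f =ᶠ[nhds x] g) :
    grad f x = grad g x := by
  unfold grad
  rw [Filter.EventuallyEq.fderiv_eq h]

lemma mulVec_norm_bound {D : Matrix (Fin 3) (Fin 2) ℝ} {κ : ℝ}
    (hD : ∀ i j, |D i j| ≤ κ) (u : Fin 2 → ℝ) : ‖D.mulVec u‖ ≤ 2 * κ * ‖u‖ := by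
  have hκ : 0 ≤ κ := le_trans (abs_nonneg _) (hD 0 0)
  rw [pi_norm_le_iff_of_nonneg (by positivity)]
  intro i
  have hu0 : |u 0| ≤ ‖u‖ := by
    have := norm_le_pi_norm u 0; simpa [Real.norm_eq_abs] using this
  have hu1 : |u 1| ≤ ‖u‖ := by
    have := norm_le_pi_norm u 1; simpa [Real.norm_eq_abs] using this
  have e : D.mulVec u i = D i 0 * u 0 + D i 1 * u 1 := by
    simp [Matrix.mulVec, dotProduct, Fin.sum_univ_two]
  rw [Real.norm_eq_abs, e]
  calc |D i 0 * u 0 + D i 1 * u 1| ≤ |D i 0 * u 0| + |D i 1 * u 1| := abs_add_le _ _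
    _ = |D i 0| * |u 0| + |D i 1| * |u 1| := by rw [abs_mul, abs_mul]
    _ ≤ κ * ‖u‖ + κ * ‖u‖ := by
        gcongr
        · exact hD i 0
        · exact hD i 1
    _ = 2 * κ * ‖u‖ := by ring

lemma mulVec_ne_zero_of_cross {ξ : Matrix (Fin 3) (Fin 2) ℝ}
    (hξ : crossProduct (fun i => ξ i 0) (fun i => ξ i 1) ≠ 0) {u : Fin 2 → ℝ} (hu : u ≠ 0) :
    ξ.mulVec u ≠ 0 := by
  intro h0
  have hcomp : ∀ i, ξ i 0 * u 0 + ξ i 1 * u 1 = 0 := by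
    intro i
    have := congrFun h0 i
    simpa [Matrix.mulVec, dotProduct, Fin.sum_univ_two] using this
  have hune : u 0 ≠ 0 ∨ u 1 ≠ 0 := by
    by_contra hc
    push_neg at hc
    exact hu (funext fun i => by fin_cases i <;> simp [hc.1, hc.2])
  rcases hune with hu0 | hu1
  · have hc : (fun i => ξ i 0) = (-(u 1 / u 0)) • (fun i => ξ i 1) := by
      funext i
      have := hcomp i
      simp only [Pi.smul_apply, smul_eq_mul]
      field_simp
      linarith
    apply hξ
    rw [hc, _root_.map_smul]
    simp [cross_self]
  · have hc : (fun i => ξ i 1) = (-(u 0 / u 1)) • (fun i => ξ i 0) := by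
      funext i
      have := hcomp i
      simp only [Pi.smul_apply, smul_eq_mul]
      field_simp
      linarith
    apply hξ
    rw [hc, LinearMap.map_smul]
    simp [cross_self]

lemma seg_lemma {f : (Fin 2 → ℝ) → Fin 3 → ℝ} (hf : Continuous f) {L : ℝ} (hL : 0 ≤ L)
    (C : Finset (Set (Fin 2 → ℝ))) (hconv : ∀ c ∈ C, Convex ℝ c)
    (hlip : ∀ c ∈ C, ∀ a ∈ c, ∀ b ∈ c, ‖f a - f b‖ ≤ L * ‖a - b‖)
    (y z : Fin 2 → ℝ)
    (hcov : ∀ t : ℝ, t ∈ Set.Icc (0:ℝ) 1 → ∃ c ∈ C, y + t • (z - y) ∈ c) :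
    ‖f z - f y‖ ≤ L * ‖z - y‖ := by
  classical
  set γ : ℝ → Fin 2 → ℝ := fun t => y + t • (z - y) with hγ
  have hγ0 : γ 0 = y := by simp [hγ]
  have hγ1 : γ 1 = z := by simp [hγ]
  have hγsub : ∀ a b : ℝ, γ a - γ b = (a - b) • (z - y) := by
    intro a b
    simp only [hγ, sub_smul]
    abel
  refine le_of_forall_pos_le_add fun ε hε => ?_
  have hgc : Continuous (fun t : ℝ => f (γ t)) := by
    apply hf.comp
    exact continuous_const.add (continuous_id.smul continuous_const)
  obtain ⟨δ, hδ0, hδ⟩ : ∃ δ > 0, ∀ a ∈ Set.Icc (0:ℝ) 1, ∀ b ∈ Set.Icc (0:ℝ) 1,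
      dist a b ≤ δ → dist (f (γ a)) (f (γ b)) ≤ ε / (C.card + 1) := by
    have hu := (isCompact_Icc (a := (0:ℝ)) (b := 1)).uniformContinuousOn_of_continuous
      hgc.continuousOn
    exact Metric.uniformContinuousOn_iff_le.1 hu (ε / (C.card + 1)) (by positivity)
  obtain ⟨N₀, hN₀⟩ := exists_nat_gt (1 / δ)
  set N : ℕ := N₀ + 1 with hNdef
  have hN1 : 1 ≤ N := Nat.le_add_left 1 N₀
  have hNpos : (0 : ℝ) < N := by positivity
  have hNδ : 1 / (N : ℝ) ≤ δ := by
    rw [div_le_iff₀ hNpos]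
    rw [div_lt_iff₀ hδ0] at hN₀
    have : (N₀ : ℝ) ≤ N := by exact_mod_cast Nat.le_succ N₀
    nlinarith
  have hmem : ∀ i : ℕ, i ≤ N → (i / N : ℝ) ∈ Set.Icc (0:ℝ) 1 := by
    intro i hi
    constructor
    · positivity
    · rw [div_le_one hNpos]; exact_mod_cast hi
  have tele : f z - f y = ∑ i ∈ Finset.range N, (f (γ ((i + 1 : ℕ) / N)) - f (γ (i / N))) := by
    rw [Finset.sum_range_sub (fun i : ℕ => f (γ (i / N)))]
    have : ((N : ℝ) / N) = 1 := div_self (ne_of_gt hNpos)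
    rw [this]
    simp [hγ0, hγ1]
  set good : ℕ → Prop := fun i => ∃ c ∈ C, γ (i / N) ∈ c ∧ γ ((i + 1 : ℕ) / N) ∈ c with hgood
  have hterm : ∀ i ∈ Finset.range N, ‖f (γ ((i + 1 : ℕ) / N)) - f (γ (i / N))‖ ≤
      (if good i then L * ‖z - y‖ / N else ε / (C.card + 1)) := by
    intro i hi
    rw [Finset.mem_range] at hi
    by_cases hg : good i
    · rw [if_pos hg]
      obtain ⟨c, hc, h1, h2⟩ := hg
      have := hlip c hc _ h2 _ h1
      calc ‖f (γ ((i + 1 : ℕ) / N)) - f (γ (i / N))‖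
          ≤ L * ‖γ ((i + 1 : ℕ) / N) - γ (i / N)‖ := this
        _ = L * ‖z - y‖ / N := by
            rw [hγsub]
            rw [norm_smul]
            have e : ((i + 1 : ℕ) / N - i / N : ℝ) = 1 / N := by
              push_cast
              ring
            rw [e]
            simp only [Real.norm_eq_abs]
            rw [abs_of_pos (by positivity)]
            field_simp
    · rw [if_neg hg]
      have d1 : dist ((i : ℝ) / N) ((i + 1 : ℕ) / N) ≤ δ := by
        rw [Real.dist_eq]
        have e : ((i : ℝ) / N - (i + 1 : ℕ) / N) = -(1 / N) := by push_cast; ring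
        rw [e, abs_neg, abs_of_pos (by positivity)]
        exact hNδ
      have := hδ _ (hmem i hi.le) _ (hmem (i + 1) hi) d1
      rw [dist_comm, dist_eq_norm] at this
      exact this
  have hsumle : ‖f z - f y‖ ≤ ∑ i ∈ Finset.range N,
      (if good i then L * ‖z - y‖ / N else ε / (C.card + 1)) := by
    rw [tele]
    exact le_trans (norm_sum_le _ _) (Finset.sum_le_sum hterm)
  -- count the bad indices
  set bads : Finset ℕ := (Finset.range N).filter (fun i => ¬ good i) with hbads
  have hψ' : ∀ i : ℕ, ∃ c, (i ∈ bads → c ∈ C ∧ γ (i / N) ∈ c) := by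
    intro i
    by_cases hi : i ∈ bads
    · have hi' : i < N := by
        rw [hbads, Finset.mem_filter, Finset.mem_range] at hi
        exact hi.1
      obtain ⟨c, hc, hm⟩ := hcov _ (hmem i hi'.le)
      exact ⟨c, fun _ => ⟨hc, hm⟩⟩
    · exact ⟨∅, fun h => absurd h hi⟩
  choose ψ hψspec using hψ'
  have hψC : ∀ i ∈ bads, ψ i ∈ C := fun i hi => (hψspec i hi).1
  have hψmem : ∀ i ∈ bads, γ (i / N) ∈ ψ i := fun i hi => (hψspec i hi).2
  have haux : ∀ i j, i ∈ bads → j ∈ bads → i < j → ψ i ≠ ψ j := by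
    intro i j hi hj hij e
    have hgi : good i := by
      refine ⟨ψ i, hψC i hi, hψmem i hi, ?_⟩
      have hmj : γ (j / N) ∈ ψ i := by rw [e]; exact hψmem j hj
      have hme : γ (i / N) ∈ ψ i := hψmem i hi
      set θ : ℝ := 1 / ((j : ℝ) - i) with hθ
      have hji : (1 : ℝ) ≤ (j : ℝ) - i := by
        have : (i : ℝ) + 1 ≤ j := by exact_mod_cast hij
        linarith
      have hθ0 : 0 ≤ θ := by positivity
      have hθ1 : θ ≤ 1 := by
        rw [hθ, div_le_one (by linarith)]
        linarith
      have hne : ((j : ℝ) - i) ≠ 0 := by linarith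
      have hNne : (N : ℝ) ≠ 0 := ne_of_gt hNpos
      have hcomb : ((i + 1 : ℕ) / N : ℝ) = (1 - θ) * (i / N) + θ * (j / N) := by
        have expand : (1 - θ) * ((i : ℝ) / N) + θ * ((j : ℝ) / N)
            = (i : ℝ) / N + θ * (((j : ℝ) - i) / N) := by ring
        have hth : θ * (((j : ℝ) - i) / N) = 1 / N := by
          rw [hθ]
          field_simp
        rw [expand, hth]
        push_cast
        ring
      have hconvex := (hconv _ (hψC i hi)) hme hmj (a := 1 - θ) (b := θ)
        (by linarith) hθ0 (by ring)
      have hgamma : γ ((i + 1 : ℕ) / N) = (1 - θ) • γ (i / N) + θ • γ (j / N) := by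
        rw [hcomb]
        simp only [hγ]
        rw [smul_add, smul_add, smul_smul, smul_smul]
        rw [add_add_add_comm]
        congr 1
        · rw [← add_smul]
          norm_num
        · rw [← add_smul]
      rw [hgamma]
      exact hconvex
    rw [hbads, Finset.mem_filter] at hi
    exact hi.2 hgi
  have hcard : bads.card ≤ C.card := by
    refine Finset.card_le_card_of_injOn ψ (fun a ha => hψC a ha) ?_
    intro a ha b hb e
    rw [Finset.mem_coe] at ha hb
    rcases lt_trichotomy a b with hlt | heq | hgt
    · exact absurd e (haux a b ha hb hlt)
    · exact heq
    · exact absurd e.symm (haux b a hb ha hgt)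
  -- final computation
  have hsplit : ∑ i ∈ Finset.range N,
      (if good i then L * ‖z - y‖ / N else ε / (C.card + 1))
      ≤ L * ‖z - y‖ + ε := by
    rw [Finset.sum_ite]
    have h1 : ∑ _x ∈ (Finset.range N).filter (fun i => good i), L * ‖z - y‖ / N
        = ((Finset.range N).filter (fun i => good i)).card * (L * ‖z - y‖ / N) := by
      rw [Finset.sum_const, nsmul_eq_mul]
    have h2 : ∑ _x ∈ (Finset.range N).filter (fun i => ¬ good i), ε / (C.card + 1)
        = bads.card * (ε / (C.card + 1)) := by
      rw [Finset.sum_const, nsmul_eq_mul, hbads]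
    rw [h1, h2]
    have hc1 : (((Finset.range N).filter (fun i => good i)).card : ℝ) ≤ N := by
      exact_mod_cast le_trans (Finset.card_filter_le _ _) (le_of_eq (Finset.card_range N))
    have hc2 : (bads.card : ℝ) ≤ C.card := by exact_mod_cast hcard
    have e1 : (((Finset.range N).filter (fun i => good i)).card : ℝ) * (L * ‖z - y‖ / N)
        ≤ L * ‖z - y‖ := by
      rw [div_eq_mul_inv]
      have hnn : 0 ≤ L * ‖z - y‖ := by positivity
      calc (((Finset.range N).filter (fun i => good i)).card : ℝ) * (L * ‖z - y‖ * (N:ℝ)⁻¹)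
          ≤ (N : ℝ) * (L * ‖z - y‖ * (N:ℝ)⁻¹) := by
            apply mul_le_mul_of_nonneg_right hc1
            positivity
        _ = L * ‖z - y‖ := by field_simp
    have e2 : (bads.card : ℝ) * (ε / (C.card + 1)) ≤ ε := by
      have step1 : (bads.card : ℝ) * (ε / (C.card + 1))
          ≤ ((C.card : ℝ) + 1) * (ε / (C.card + 1)) := by
        apply mul_le_mul_of_nonneg_right _ (by positivity)
        linarith
      have step2 : ((C.card : ℝ) + 1) * (ε / (C.card + 1)) = ε := by
        field_simp
      linarith
    linarith
  linarith

lemma null_line (l : (Fin 2 → ℝ) →ₗ[ℝ] ℝ) (x₀ : Fin 2 → ℝ) (hx₀ : l x₀ ≠ 0) (c : ℝ) :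
    volume {x : Fin 2 → ℝ | l x = c} = 0 := by
  set p : Fin 2 → ℝ := (c / l x₀) • x₀ with hp
  have hlp : l p = c := by
    rw [hp, _root_.map_smul, smul_eq_mul]
    field_simp
  have hset : {x : Fin 2 → ℝ | l x = c}
      = (AffineSubspace.mk' p (LinearMap.ker l) : Set (Fin 2 → ℝ)) := by
    ext x
    rw [Set.mem_setOf_eq, SetLike.mem_coe, AffineSubspace.mem_mk',
      vsub_eq_sub, LinearMap.mem_ker, map_sub, hlp, sub_eq_zero]
  rw [hset]
  refine Measure.addHaar_affineSubspace volume _ ?_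
  intro e
  have hmem : p + x₀ ∈ AffineSubspace.mk' p (LinearMap.ker l) := by
    rw [e]; exact AffineSubspace.mem_top ℝ _ _
  rw [AffineSubspace.mem_mk', vsub_eq_sub, add_sub_cancel_left,
    LinearMap.mem_ker] at hmem
  exact hx₀ hmem

lemma grid_null {h : ℝ} :
    volume {x : Fin 2 → ℝ | (∃ k : ℤ, x 0 = h * k) ∨ (∃ k : ℤ, x 1 = h * k)
      ∨ (∃ k : ℤ, x 0 - x 1 = h * k)} = 0 := by
  have hsub : {x : Fin 2 → ℝ | (∃ k : ℤ, x 0 = h * k) ∨ (∃ k : ℤ, x 1 = h * k)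
      ∨ (∃ k : ℤ, x 0 - x 1 = h * k)} ⊆
      ⋃ k : ℤ, ({x : Fin 2 → ℝ | x 0 = h * k} ∪ ({x : Fin 2 → ℝ | x 1 = h * k}
        ∪ {x : Fin 2 → ℝ | x 0 - x 1 = h * k})) := by
    rintro x (⟨k, hk⟩ | ⟨k, hk⟩ | ⟨k, hk⟩) <;>
      exact Set.mem_iUnion.2 ⟨k, by simp [hk]⟩
  refine measure_mono_null hsub (measure_iUnion_null fun k => ?_)
  have l0 : ((LinearMap.proj 0 : ((Fin 2) → ℝ) →ₗ[ℝ] ℝ)) (Pi.single 0 1) ≠ 0 := by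
    simp
  have l1 : ((LinearMap.proj 1 : ((Fin 2) → ℝ) →ₗ[ℝ] ℝ)) (Pi.single 1 1) ≠ 0 := by
    simp
  have l2 : (((LinearMap.proj (R := ℝ) (φ := fun _ : Fin 2 => ℝ) 0) - (LinearMap.proj (R := ℝ) (φ := fun _ : Fin 2 => ℝ) 1))) (Pi.single 0 1) ≠ 0 := by
    simp
  refine measure_union_null ?_ (measure_union_null ?_ ?_)
  · exact null_line (LinearMap.proj 0) (Pi.single 0 1) l0 (h * k)
  · exact null_line (LinearMap.proj 1) (Pi.single 1 1) l1 (h * k)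
  · exact null_line ((LinearMap.proj (R := ℝ) (φ := fun _ : Fin 2 => ℝ) 0) - (LinearMap.proj (R := ℝ) (φ := fun _ : Fin 2 => ℝ) 1)) (Pi.single 0 1) l2 (h * k)

lemma continuous_mulVec (A : Matrix (Fin 3) (Fin 2) ℝ) :
    Continuous fun w : Fin 2 → ℝ => A.mulVec w := by
  have h := LinearMap.continuous_of_finiteDimensional (Matrix.mulVecLin A)
  have e : ⇑(Matrix.mulVecLin A) = fun w : Fin 2 → ℝ => A.mulVec w := by
    funext w; rw [Matrix.mulVecLin_apply]
  rwa [e] at h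

lemma latC_dir0 (h : ℝ) (a1 a2 : ℤ) :
    h • latC (a1 + 1, a2) - h • latC (a1, a2) = h • (Pi.single 0 1 : Fin 2 → ℝ) := by
  funext w
  fin_cases w
  · show h * latC (a1 + 1, a2) 0 - h * latC (a1, a2) 0 = h * (Pi.single 0 1 : Fin 2 → ℝ) 0
    rw [latC0, latC0, Pi.single_eq_same]
    push_cast
    ring
  · show h * latC (a1 + 1, a2) 1 - h * latC (a1, a2) 1 = h * (Pi.single 0 1 : Fin 2 → ℝ) 1
    rw [latC1, latC1, Pi.single_eq_of_ne (by decide : (1 : Fin 2) ≠ 0)]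
    push_cast
    ring

lemma latC_dir1 (h : ℝ) (a1 a2 : ℤ) :
    h • latC (a1, a2 + 1) - h • latC (a1, a2) = h • (Pi.single 1 1 : Fin 2 → ℝ) := by
  funext w
  fin_cases w
  · show h * latC (a1, a2 + 1) 0 - h * latC (a1, a2) 0 = h * (Pi.single 1 1 : Fin 2 → ℝ) 0
    rw [latC0, latC0, Pi.single_eq_of_ne (by decide : (0 : Fin 2) ≠ 1)]
    push_cast
    ring
  · show h * latC (a1, a2 + 1) 1 - h * latC (a1, a2) 1 = h * (Pi.single 1 1 : Fin 2 → ℝ) 1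
    rw [latC1, latC1, Pi.single_eq_same]
    push_cast
    ring

lemma col_est (v : (Fin 2 → ℝ) → Fin 3 → ℝ) (hv1 : ContDiff ℝ 1 v)
    {K : Set (Fin 2 → ℝ)} {ε δε : ℝ}
    (hδ : ∀ a ∈ K, ∀ b ∈ K, dist a b ≤ δε → ‖fderiv ℝ v a - fderiv ℝ v b‖ ≤ ε)
    {cc : Set (Fin 2 → ℝ)} (hccconv : Convex ℝ cc) (hccK : cc ⊆ K)
    (hdiam : ∀ a ∈ cc, ∀ b ∈ cc, dist a b ≤ δε)
    {pa pb : Fin 2 → ℝ} (hpa : pa ∈ cc) (hpb : pb ∈ cc) {h : ℝ} (hh : 0 < h)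
    (j : Fin 2) (hdir : pb - pa = h • (Pi.single j 1 : Fin 2 → ℝ))
    {x' : Fin 2 → ℝ} (hx' : x' ∈ cc) (i : Fin 3) :
    |(v pb i - v pa i) / h - grad v x' i j| ≤ ε := by
  have hdiff : ∀ z ∈ cc, HasFDerivWithinAt v (fderiv ℝ v z) cc z := fun z _ =>
    ((hv1.differentiable one_ne_zero) z).hasFDerivAt.hasFDerivWithinAt
  have hbound : ∀ z ∈ cc, ‖fderiv ℝ v z - fderiv ℝ v x'‖ ≤ ε := fun z hz =>
    hδ z (hccK hz) x' (hccK hx') (hdiam z hz x' hx')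
  have key := Convex.norm_image_sub_le_of_norm_hasFDerivWithin_le' hdiff hbound hccconv hpa hpb
  rw [hdir] at key
  have hnorm : ‖h • (Pi.single j 1 : Fin 2 → ℝ)‖ = h := by
    rw [norm_smul, Pi.norm_single, Real.norm_eq_abs, abs_of_pos hh, norm_one, mul_one]
  rw [hnorm] at key
  have hcoord := norm_le_pi_norm (v pb - v pa - (fderiv ℝ v x') (h • (Pi.single j 1 : Fin 2 → ℝ))) i
  have hcoord' : |v pb i - v pa i - h * (fderiv ℝ v x' (Pi.single j 1) i)| ≤ ε * h := by
    have e : (v pb - v pa - (fderiv ℝ v x') (h • (Pi.single j 1 : Fin 2 → ℝ))) i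
        = v pb i - v pa i - h * (fderiv ℝ v x' (Pi.single j 1) i) := by
      rw [Pi.sub_apply, Pi.sub_apply, ContinuousLinearMap.map_smul, Pi.smul_apply, smul_eq_mul]
    rw [e, Real.norm_eq_abs] at hcoord
    exact le_trans hcoord key
  have hgrad : grad v x' i j = fderiv ℝ v x' (Pi.single j 1) i := rfl
  have e2 : (v pb i - v pa i) / h - grad v x' i j
      = (v pb i - v pa i - h * (fderiv ℝ v x' (Pi.single j 1) i)) / h := by
    rw [hgrad]
    field_simp
  rw [e2, abs_div, abs_of_pos hh, div_le_iff₀ hh]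
  linarith [hcoord']

lemma cellAff (v : (Fin 2 → ℝ) → Fin 3 → ℝ) (hv1 : ContDiff ℝ 1 v)
    {h R ε δε M : ℝ} (hh : 0 < h) (hh1 : h ≤ 1) (hR : 1 ≤ R) (hM0 : 0 ≤ M)
    (hM : ∀ z ∈ Metric.closedBall (0 : Fin 2 → ℝ) (R + 3), ‖fderiv ℝ v z‖ ≤ M)
    (hδ : ∀ a ∈ Metric.closedBall (0 : Fin 2 → ℝ) (R + 3),
      ∀ b ∈ Metric.closedBall (0 : Fin 2 → ℝ) (R + 3),
        dist a b ≤ δε → ‖fderiv ℝ v a - fderiv ℝ v b‖ ≤ ε)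
    (hhδ : h ≤ δε)
    (Kx : Finset (ℤ × ℤ)) (m : ℤ × ℤ) (σ : Bool)
    (hverts : ∀ d1 d2 : ℤ, 0 ≤ d1 → d1 ≤ 1 → 0 ≤ d2 → d2 ≤ 1 → (m.1 + d1, m.2 + d2) ∈ Kx) :
    ∃ (Ξ : Matrix (Fin 3) (Fin 2) ℝ) (a : Fin 3 → ℝ),
      (∀ x ∈ cCell h m σ, interp v h Kx x = Ξ.mulVec x + a) ∧
      ((∃ w ∈ cCell h m σ, ‖w‖ ≤ R + 1) →
        ∀ x' ∈ cCell h m σ, ∀ (i : Fin 3) (j : Fin 2), |Ξ i j - grad v x' i j| ≤ ε) ∧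
      ((∃ w ∈ cCell h m σ, ‖w‖ ≤ R + 1) →
        ∀ x' ∈ cCell h m σ, ‖interp v h Kx x' - v x'‖ ≤ 3 * M * h) := by
  have hm00 : (m.1 + 0, m.2 + 0) = m := by simp
  have hmem1 : m ∈ Kx := by rw [← hm00]; exact hverts 0 0 le_rfl zero_le_one le_rfl zero_le_one
  have hmem2 : (m.1 + 1, m.2) ∈ Kx := by
    have := hverts 1 0 zero_le_one le_rfl le_rfl zero_le_one
    simpa using this
  have hmem3 : (m.1, m.2 + 1) ∈ Kx := by
    have := hverts 0 1 le_rfl zero_le_one zero_le_one le_rfl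
    simpa using this
  have hmem4 : (m.1 + 1, m.2 + 1) ∈ Kx := hverts 1 1 zero_le_one le_rfl zero_le_one le_rfl
  have hcoord : ∀ k : ℤ × ℤ, (h • latC k) 0 / h = (k.1 : ℝ) ∧ (h • latC k) 1 / h = (k.2 : ℝ) := by
    intro k
    constructor <;>
      · simp only [Pi.smul_apply, latC0, latC1, smul_eq_mul]
        field_simp
  have hp0 : h • latC m ∈ cCell h m σ := by
    cases σ <;>
      simp only [cCell, Set.mem_setOf_eq, if_true, if_false, Bool.false_eq_true] <;>
      rw [(hcoord m).1, (hcoord m).2] <;>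
      norm_num
  have hsub : (∃ w ∈ cCell h m σ, ‖w‖ ≤ R + 1) →
      cCell h m σ ⊆ Metric.closedBall (0 : Fin 2 → ℝ) (R + 3) := by
    rintro ⟨w, hw, hwn⟩ y hy
    rw [Metric.mem_closedBall, dist_zero_right]
    have h1 : ‖y - w‖ ≤ h := cCell_dist hh hy hw
    calc ‖y‖ = ‖(y - w) + w‖ := by rw [sub_add_cancel]
      _ ≤ ‖y - w‖ + ‖w‖ := norm_add_le _ _
      _ ≤ h + (R + 1) := add_le_add h1 hwn
      _ ≤ R + 3 := by linarith
  have hdiam : ∀ a ∈ cCell h m σ, ∀ b ∈ cCell h m σ, dist a b ≤ δε := by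
    intro a ha b hb
    rw [dist_eq_norm]
    exact le_trans (cCell_dist hh ha hb) hhδ
  cases σ
  · -- lower triangle
    set p0 := h • latC m with hp0def
    set p1 := h • latC (m.1 + 1, m.2) with hp1def
    set p2 := h • latC (m.1 + 1, m.2 + 1) with hp2def
    obtain ⟨Ξ, a, hΞeq, hΞent⟩ := affine_form hh (v p0) (v p1 - v p0) (v p2 - v p1)
      (m.1 : ℝ) (m.2 : ℝ)
    have hEq : Set.EqOn (interp v h Kx) (fun x => Ξ.mulVec x + a) (oCell h m false) := by
      intro x hx
      rw [interp_eq_lower v hh Kx m hmem1 hmem2 hmem4 hx]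
      exact hΞeq x
    have hEqc : ∀ x ∈ cCell h m false, interp v h Kx x = Ξ.mulVec x + a := by
      intro x hx
      exact (hEq.closure (continuous_interp v h Kx)
        ((continuous_mulVec Ξ).add continuous_const)) (cCell_subset_closure hh m false hx)
    have hp1m : p1 ∈ cCell h m false := by
      simp only [cCell, Set.mem_setOf_eq, if_false, Bool.false_eq_true, hp1def]
      rw [(hcoord ((m.1 + 1 : ℤ), m.2)).1, (hcoord ((m.1 + 1 : ℤ), m.2)).2]
      push_cast
      refine ⟨by linarith, by linarith, by linarith⟩
    have hp2m : p2 ∈ cCell h m false := by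
      simp only [cCell, Set.mem_setOf_eq, if_false, Bool.false_eq_true, hp2def]
      rw [(hcoord ((m.1 + 1 : ℤ), m.2 + 1)).1, (hcoord ((m.1 + 1 : ℤ), m.2 + 1)).2]
      push_cast
      refine ⟨by linarith, by linarith, by linarith⟩
    have hd1 : p1 - p0 = h • (Pi.single 0 1 : Fin 2 → ℝ) := by
      rw [hp1def, hp0def]
      exact latC_dir0 h m.1 m.2
    have hd2 : p2 - p1 = h • (Pi.single 1 1 : Fin 2 → ℝ) := by
      rw [hp2def, hp1def]
      exact latC_dir1 h (m.1 + 1) m.2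
    have hdn1 : ‖p1 - p0‖ = h := by
      rw [hd1, norm_smul, Pi.norm_single, Real.norm_eq_abs, abs_of_pos hh, norm_one, mul_one]
    have hdn2 : ‖p2 - p1‖ = h := by
      rw [hd2, norm_smul, Pi.norm_single, Real.norm_eq_abs, abs_of_pos hh, norm_one, mul_one]
    refine ⟨Ξ, a, hEqc, ?_, ?_⟩
    · intro hex x' hx' i j
      have hccK := hsub hex
      fin_cases j
      · show |Ξ i 0 - grad v x' i 0| ≤ ε
        have := col_est v hv1 hδ (convex_cCell h m false) hccK hdiam hp0 hp1m hh 0 hd1 hx' i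
        have he : Ξ i 0 = (v p1 i - v p0 i) / h := by
          rw [hΞent i 0, if_pos rfl]
          rfl
        rw [he]
        simpa using this
      · show |Ξ i 1 - grad v x' i 1| ≤ ε
        have := col_est v hv1 hδ (convex_cCell h m false) hccK hdiam hp1m hp2m hh 1 hd2 hx' i
        have he : Ξ i 1 = (v p2 i - v p1 i) / h := by
          rw [hΞent i 1, if_neg (by decide : ¬(1 : Fin 2) = 0)]
          rfl
        rw [he]
        simpa using this
    · intro hex x' hx'
      have hccK := hsub hex
      have hdiffW : ∀ z ∈ cCell h m false,
          HasFDerivWithinAt v (fderiv ℝ v z) (cCell h m false) z :=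
        fun z _ => ((hv1.differentiable one_ne_zero) z).hasFDerivAt.hasFDerivWithinAt
      have mvt : ∀ a' ∈ cCell h m false, ∀ b' ∈ cCell h m false,
          ‖v b' - v a'‖ ≤ M * ‖b' - a'‖ :=
        fun a' ha' b' hb' => Convex.norm_image_sub_le_of_norm_hasFDerivWithin_le hdiffW
          (fun z hz => hM z (hccK hz)) (convex_cCell h m false) ha' hb'
      obtain ⟨hs0, hs1', ht0, ht1⟩ := cCell_st01 hh hx'
      have hval : interp v h Kx x' - v x' = (v p0 - v x')
          + (x' 0 / h - (m.1 : ℝ)) • (v p1 - v p0)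
          + (x' 1 / h - (m.2 : ℝ)) • (v p2 - v p1) := by
        rw [hEqc x' hx', ← hΞeq x']
        abel
      rw [hval]
      have b1 : ‖v p0 - v x'‖ ≤ M * h := by
        refine le_trans (mvt x' hx' p0 hp0) ?_
        have hd := cCell_dist hh hp0 hx'
        nlinarith [norm_nonneg (p0 - x')]
      have b2 : ‖v p1 - v p0‖ ≤ M * h := le_trans (mvt p0 hp0 p1 hp1m) (by rw [hdn1])
      have b3 : ‖v p2 - v p1‖ ≤ M * h := le_trans (mvt p1 hp1m p2 hp2m) (by rw [hdn2])
      calc ‖(v p0 - v x') + (x' 0 / h - (m.1 : ℝ)) • (v p1 - v p0)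
            + (x' 1 / h - (m.2 : ℝ)) • (v p2 - v p1)‖
          ≤ ‖v p0 - v x'‖ + ‖(x' 0 / h - (m.1 : ℝ)) • (v p1 - v p0)‖
            + ‖(x' 1 / h - (m.2 : ℝ)) • (v p2 - v p1)‖ := norm_add₃_le
        _ = ‖v p0 - v x'‖ + |x' 0 / h - (m.1 : ℝ)| * ‖v p1 - v p0‖
            + |x' 1 / h - (m.2 : ℝ)| * ‖v p2 - v p1‖ := by
            rw [norm_smul, norm_smul, Real.norm_eq_abs, Real.norm_eq_abs]
        _ ≤ 3 * M * h := by
            rw [abs_of_nonneg hs0, abs_of_nonneg ht0]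
            nlinarith [norm_nonneg (v p1 - v p0), norm_nonneg (v p2 - v p1),
              mul_nonneg hM0 hh.le]
  · -- upper triangle
    set p0 := h • latC m with hp0def
    set p1 := h • latC (m.1, m.2 + 1) with hp1def
    set p2 := h • latC (m.1 + 1, m.2 + 1) with hp2def
    obtain ⟨Ξ, a, hΞeq, hΞent⟩ := affine_form hh (v p0) (v p2 - v p1) (v p1 - v p0)
      (m.1 : ℝ) (m.2 : ℝ)
    have hEq : Set.EqOn (interp v h Kx) (fun x => Ξ.mulVec x + a) (oCell h m true) := by
      intro x hx
      have key : v p0 + (x 1 / h - (m.2 : ℝ)) • (v p1 - v p0)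
          + (x 0 / h - (m.1 : ℝ)) • (v p2 - v p1) = Ξ.mulVec x + a := by
        rw [← hΞeq x]
        funext k
        simp only [Pi.add_apply, Pi.sub_apply, Pi.smul_apply, smul_eq_mul]
        ring
      rw [interp_eq_upper v hh Kx m hmem1 hmem3 hmem4 hx]
      exact key
    have hEqc : ∀ x ∈ cCell h m true, interp v h Kx x = Ξ.mulVec x + a := by
      intro x hx
      exact (hEq.closure (continuous_interp v h Kx)
        ((continuous_mulVec Ξ).add continuous_const)) (cCell_subset_closure hh m true hx)
    have hp1m : p1 ∈ cCell h m true := by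
      simp only [cCell, Set.mem_setOf_eq, if_true, hp1def]
      rw [(hcoord ((m.1 : ℤ), m.2 + 1)).1, (hcoord ((m.1 : ℤ), m.2 + 1)).2]
      push_cast
      refine ⟨by linarith, by linarith, by linarith⟩
    have hp2m : p2 ∈ cCell h m true := by
      simp only [cCell, Set.mem_setOf_eq, if_true, hp2def]
      rw [(hcoord ((m.1 + 1 : ℤ), m.2 + 1)).1, (hcoord ((m.1 + 1 : ℤ), m.2 + 1)).2]
      push_cast
      refine ⟨by linarith, by linarith, by linarith⟩
    have hd1 : p1 - p0 = h • (Pi.single 1 1 : Fin 2 → ℝ) := by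
      rw [hp1def, hp0def]
      exact latC_dir1 h m.1 m.2
    have hd2 : p2 - p1 = h • (Pi.single 0 1 : Fin 2 → ℝ) := by
      rw [hp2def, hp1def]
      exact latC_dir0 h m.1 (m.2 + 1)
    have hdn1 : ‖p1 - p0‖ = h := by
      rw [hd1, norm_smul, Pi.norm_single, Real.norm_eq_abs, abs_of_pos hh, norm_one, mul_one]
    have hdn2 : ‖p2 - p1‖ = h := by
      rw [hd2, norm_smul, Pi.norm_single, Real.norm_eq_abs, abs_of_pos hh, norm_one, mul_one]
    refine ⟨Ξ, a, hEqc, ?_, ?_⟩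
    · intro hex x' hx' i j
      have hccK := hsub hex
      fin_cases j
      · show |Ξ i 0 - grad v x' i 0| ≤ ε
        have := col_est v hv1 hδ (convex_cCell h m true) hccK hdiam hp1m hp2m hh 0 hd2 hx' i
        have he : Ξ i 0 = (v p2 i - v p1 i) / h := by
          rw [hΞent i 0, if_pos rfl]
          rfl
        rw [he]
        simpa using this
      · show |Ξ i 1 - grad v x' i 1| ≤ ε
        have := col_est v hv1 hδ (convex_cCell h m true) hccK hdiam hp0 hp1m hh 1 hd1 hx' i
        have he : Ξ i 1 = (v p1 i - v p0 i) / h := by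
          rw [hΞent i 1, if_neg (by decide : ¬(1 : Fin 2) = 0)]
          rfl
        rw [he]
        simpa using this
    · intro hex x' hx'
      have hccK := hsub hex
      have hdiffW : ∀ z ∈ cCell h m true,
          HasFDerivWithinAt v (fderiv ℝ v z) (cCell h m true) z :=
        fun z _ => ((hv1.differentiable one_ne_zero) z).hasFDerivAt.hasFDerivWithinAt
      have mvt : ∀ a' ∈ cCell h m true, ∀ b' ∈ cCell h m true,
          ‖v b' - v a'‖ ≤ M * ‖b' - a'‖ :=
        fun a' ha' b' hb' => Convex.norm_image_sub_le_of_norm_hasFDerivWithin_le hdiffW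
          (fun z hz => hM z (hccK hz)) (convex_cCell h m true) ha' hb'
      obtain ⟨hs0, hs1', ht0, ht1⟩ := cCell_st01 hh hx'
      have hval : interp v h Kx x' - v x' = (v p0 - v x')
          + (x' 0 / h - (m.1 : ℝ)) • (v p2 - v p1)
          + (x' 1 / h - (m.2 : ℝ)) • (v p1 - v p0) := by
        rw [hEqc x' hx', ← hΞeq x']
        abel
      rw [hval]
      have b1 : ‖v p0 - v x'‖ ≤ M * h := by
        refine le_trans (mvt x' hx' p0 hp0) ?_
        have hd := cCell_dist hh hp0 hx'
        nlinarith [norm_nonneg (p0 - x')]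
      have b2 : ‖v p1 - v p0‖ ≤ M * h := le_trans (mvt p0 hp0 p1 hp1m) (by rw [hdn1])
      have b3 : ‖v p2 - v p1‖ ≤ M * h := le_trans (mvt p1 hp1m p2 hp2m) (by rw [hdn2])
      calc ‖(v p0 - v x') + (x' 0 / h - (m.1 : ℝ)) • (v p2 - v p1)
            + (x' 1 / h - (m.2 : ℝ)) • (v p1 - v p0)‖
          ≤ ‖v p0 - v x'‖ + ‖(x' 0 / h - (m.1 : ℝ)) • (v p2 - v p1)‖
            + ‖(x' 1 / h - (m.2 : ℝ)) • (v p1 - v p0)‖ := norm_add₃_le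
        _ = ‖v p0 - v x'‖ + |x' 0 / h - (m.1 : ℝ)| * ‖v p2 - v p1‖
            + |x' 1 / h - (m.2 : ℝ)| * ‖v p1 - v p0‖ := by
            rw [norm_smul, norm_smul, Real.norm_eq_abs, Real.norm_eq_abs]
        _ ≤ 3 * M * h := by
            rw [abs_of_nonneg hs0, abs_of_nonneg ht0]
            nlinarith [norm_nonneg (v p1 - v p0), norm_nonneg (v p2 - v p1),
              mul_nonneg hM0 hh.le]


lemma key (S : Set (Fin 2 → ℝ)) (hSopen : IsOpen S) (hSbdd : Bornology.IsBounded S)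
    (hSne : S.Nonempty)
    (v : (Fin 2 → ℝ) → Fin 3 → ℝ) (hv1 : ContDiff ℝ 1 v)
    (hv2 : ∀ x ∈ closure S, crossProduct (fun i => grad v x i 0) (fun i => grad v x i 1) ≠ 0) :
    ∃ σ₀ : ℝ, 0 < σ₀ ∧ ∀ ε : ℝ, 0 < ε → ε ≤ σ₀ / 8 →
      ∃ u : (Fin 2 → ℝ) → Fin 3 → ℝ, IsAffET S u ∧ LocInjOn S u ∧
        ∀ᵐ x, x ∈ S → ‖u x - v x‖ ≤ ε ∧ ‖grad u x - grad v x‖ ≤ ε := by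
  classical
  obtain ⟨R0, hR0⟩ := hSbdd.subset_closedBall 0
  set R : ℝ := max R0 1 with hRdef
  have hR1 : (1 : ℝ) ≤ R := le_max_right _ _
  have hSR : S ⊆ Metric.closedBall 0 R :=
    hR0.trans (Metric.closedBall_subset_closedBall (le_max_left _ _))
  have hSnorm : ∀ x ∈ S, ‖x‖ ≤ R := by
    intro x hx
    have := hSR hx
    rwa [Metric.mem_closedBall, dist_zero_right] at this
  set K : Set (Fin 2 → ℝ) := Metric.closedBall 0 (R + 3) with hKdef
  have hKcomp : IsCompact K := isCompact_closedBall _ _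
  have hmemK : ∀ w : Fin 2 → ℝ, ‖w‖ ≤ R + 3 → w ∈ K := by
    intro w hw
    rw [hKdef, Metric.mem_closedBall, dist_zero_right]
    exact hw
  have hDvc : Continuous (fderiv ℝ v) := hv1.continuous_fderiv one_ne_zero
  obtain ⟨zM, hzM, hzMmax⟩ := hKcomp.exists_isMaxOn
    ⟨0, hmemK 0 (by rw [norm_zero]; linarith)⟩
    ((continuous_norm.comp hDvc).continuousOn)
  set M : ℝ := ‖fderiv ℝ v zM‖ with hMdef
  have hM0 : 0 ≤ M := norm_nonneg _
  have hM : ∀ z ∈ K, ‖fderiv ℝ v z‖ ≤ M := fun z hz => hzMmax hz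
  have uc : ∀ κ : ℝ, 0 < κ → ∃ δ : ℝ, 0 < δ ∧ ∀ a ∈ K, ∀ b ∈ K,
      dist a b ≤ δ → ‖fderiv ℝ v a - fderiv ℝ v b‖ ≤ κ := by
    intro κ hκ
    have hu := hKcomp.uniformContinuousOn_of_continuous hDvc.continuousOn
    obtain ⟨δ, hδ0, hδ⟩ := Metric.uniformContinuousOn_iff_le.1 hu κ hκ
    refine ⟨δ, hδ0, fun a ha b hb hab => ?_⟩
    have := hδ a ha b hb hab
    rwa [dist_eq_norm] at this
  have hgradc : Continuous fun q : (Fin 2 → ℝ) × (Fin 2 → ℝ) => ‖(grad v q.1).mulVec q.2‖ := by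
    refine continuous_norm.comp ?_
    refine continuous_pi fun i => ?_
    have hent : ∀ j : Fin 2, Continuous fun q : (Fin 2 → ℝ) × (Fin 2 → ℝ) => grad v q.1 i j := by
      intro j
      have e : (fun q : (Fin 2 → ℝ) × (Fin 2 → ℝ) => grad v q.1 i j)
          = (fun q : (Fin 2 → ℝ) × (Fin 2 → ℝ) =>
              fderiv ℝ v q.1 ((Pi.single j 1 : Fin 2 → ℝ)) i) := rfl
      rw [e]
      exact (continuous_apply i).comp
        ((ContinuousLinearMap.apply ℝ (Fin 3 → ℝ)
          ((Pi.single j 1 : Fin 2 → ℝ))).continuous.comp (hDvc.comp continuous_fst))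
    have e : (fun q : (Fin 2 → ℝ) × (Fin 2 → ℝ) => (grad v q.1).mulVec q.2 i)
        = fun q : (Fin 2 → ℝ) × (Fin 2 → ℝ) =>
            grad v q.1 i 0 * q.2 0 + grad v q.1 i 1 * q.2 1 := by
      funext q
      simp [Matrix.mulVec, dotProduct, Fin.sum_univ_two]
    rw [e]
    exact ((hent 0).mul ((continuous_apply (0 : Fin 2)).comp continuous_snd)).add
      ((hent 1).mul ((continuous_apply (1 : Fin 2)).comp continuous_snd))
  have hSclc : IsCompact (closure S) :=
    Metric.isCompact_of_isClosed_isBounded isClosed_closure hSbdd.closure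
  have hSpSc : IsCompact ((closure S) ×ˢ Metric.sphere (0 : Fin 2 → ℝ) 1) :=
    hSclc.prod (isCompact_sphere _ _)
  have hnep : ((closure S) ×ˢ Metric.sphere (0 : Fin 2 → ℝ) 1).Nonempty := by
    obtain ⟨x₀, hx₀⟩ := hSne
    refine ⟨(x₀, (Pi.single 0 1 : Fin 2 → ℝ)), Set.mk_mem_prod (subset_closure hx₀) ?_⟩
    rw [Metric.mem_sphere, dist_zero_right, Pi.norm_single, norm_one]
  obtain ⟨q₀, hq₀mem, hq₀min⟩ := hSpSc.exists_isMinOn hnep hgradc.continuousOn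
  set σ₀ : ℝ := ‖(grad v q₀.1).mulVec q₀.2‖ with hσdef
  have hq₀S : q₀.1 ∈ closure S := (Set.mem_prod.1 hq₀mem).1
  have hq₀s : ‖q₀.2‖ = 1 := by
    have := (Set.mem_prod.1 hq₀mem).2
    rwa [Metric.mem_sphere, dist_zero_right] at this
  have hσ₀pos : 0 < σ₀ := by
    rw [hσdef, norm_pos_iff]
    refine mulVec_ne_zero_of_cross (hv2 _ hq₀S) ?_
    intro e
    rw [e, norm_zero] at hq₀s
    norm_num at hq₀s
  have hσ : ∀ x ∈ closure S, ∀ w : Fin 2 → ℝ, σ₀ * ‖w‖ ≤ ‖(grad v x).mulVec w‖ := by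
    intro x hx w
    rcases eq_or_ne w 0 with rfl | hw
    · simp [Matrix.mulVec_zero]
    · have hwn : (0 : ℝ) < ‖w‖ := norm_pos_iff.2 hw
      have hsph : ‖w‖⁻¹ • w ∈ Metric.sphere (0 : Fin 2 → ℝ) 1 := by
        rw [Metric.mem_sphere, dist_zero_right, norm_smul, Real.norm_eq_abs,
          abs_of_pos (by positivity), inv_mul_cancel₀ (ne_of_gt hwn)]
      have hmin := hq₀min (Set.mk_mem_prod hx hsph)
      simp only [Set.mem_setOf_eq] at hmin
      have e2 : (grad v x).mulVec (‖w‖⁻¹ • w) = ‖w‖⁻¹ • (grad v x).mulVec w :=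
        Matrix.mulVec_smul _ _ _
      rw [e2, norm_smul, Real.norm_eq_abs, abs_of_pos (by positivity)] at hmin
      calc σ₀ * ‖w‖ ≤ (‖w‖⁻¹ * ‖(grad v x).mulVec w‖) * ‖w‖ := by nlinarith
        _ = ‖(grad v x).mulVec w‖ := by field_simp
  refine ⟨σ₀, hσ₀pos, ?_⟩
  obtain ⟨δ₁', hδ₁'0, hδ₁'uc⟩ := uc (σ₀ / 8) (by positivity)
  set δ₁ : ℝ := min δ₁' 1 with hδ₁def
  have hδ₁0 : 0 < δ₁ := lt_min hδ₁'0 one_pos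
  have hδ₁1 : δ₁ ≤ 1 := min_le_right _ _
  have hδ₁le : δ₁ ≤ δ₁' := min_le_left _ _
  intro ε hε hεσ
  obtain ⟨δε, hδε0, hδεuc⟩ := uc ε hε
  set h : ℝ := min (min δε (δ₁ / 2)) (min 1 (ε / (3 * (M + 1)))) with hhdef
  have hh : 0 < h := lt_min (lt_min hδε0 (by positivity)) (lt_min one_pos (by positivity))
  have hh1 : h ≤ 1 := le_trans (min_le_right _ _) (min_le_left _ _)
  have hhδε : h ≤ δε := le_trans (min_le_left _ _) (min_le_left _ _)
  have hhr : h ≤ δ₁ / 2 := le_trans (min_le_left _ _) (min_le_right _ _)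
  have hhε3 : 3 * M * h ≤ ε := by
    have hle : h ≤ ε / (3 * (M + 1)) := le_trans (min_le_right _ _) (min_le_right _ _)
    have ha : (0 : ℝ) < 3 * (M + 1) := by positivity
    have h2 : 3 * M * h ≤ 3 * M * (ε / (3 * (M + 1))) :=
      mul_le_mul_of_nonneg_left hle (by positivity)
    have h3 : 3 * M * (ε / (3 * (M + 1))) ≤ ε := by
      rw [show 3 * M * (ε / (3 * (M + 1))) = (3 * M * ε) / (3 * (M + 1)) by ring,
        div_le_iff₀ ha]
      nlinarith [hε.le]
    linarith
  set N : ℕ := ⌈(R + 2) / h⌉₊ + 1 with hNdef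
  set Bx : Finset (ℤ × ℤ) := Finset.Icc (-(N : ℤ)) N ×ˢ Finset.Icc (-(N : ℤ)) N with hBx
  set Kx : Finset (ℤ × ℤ) :=
    Finset.Icc (-(N : ℤ) - 2) ((N : ℤ) + 2) ×ˢ Finset.Icc (-(N : ℤ) - 2) ((N : ℤ) + 2) with hKx
  have hfloorB : ∀ w : Fin 2 → ℝ, ‖w‖ ≤ R + 2 → (⌊w 0 / h⌋, ⌊w 1 / h⌋) ∈ Bx := by
    intro w hw
    have hRN : (R + 2) / h ≤ (N : ℝ) := by
      calc (R + 2) / h ≤ (⌈(R + 2) / h⌉₊ : ℝ) := Nat.le_ceil _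
        _ ≤ (N : ℝ) := by
            rw [hNdef]
            exact_mod_cast Nat.le_succ _
    have hkey : ∀ i : Fin 2, -(N : ℤ) ≤ ⌊w i / h⌋ ∧ ⌊w i / h⌋ ≤ (N : ℤ) := by
      intro i
      have habs : |w i| ≤ R + 2 :=
        le_trans (by simpa [Real.norm_eq_abs] using norm_le_pi_norm w i) hw
      obtain ⟨hwl, hwu⟩ := abs_le.1 habs
      have h1 : w i / h ≤ (R + 2) / h := by gcongr
      have h2 : -((R + 2) / h) ≤ w i / h := by
        rw [← neg_div]
        gcongr
      constructor
      · refine Int.le_floor.2 ?_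
        have hceil : (R + 2) / h ≤ (⌈(R + 2) / h⌉₊ : ℝ) + 1 := by
          linarith [Nat.le_ceil ((R + 2) / h)]
        push_cast
        linarith
      · have := le_trans (Int.floor_le (w i / h)) (le_trans h1 hRN)
        exact_mod_cast this
    rw [hBx, Finset.mem_product, Finset.mem_Icc, Finset.mem_Icc]
    exact ⟨⟨(hkey 0).1, (hkey 0).2⟩, ⟨(hkey 1).1, (hkey 1).2⟩⟩
  have hvertsK : ∀ m ∈ Bx, ∀ d1 d2 : ℤ, 0 ≤ d1 → d1 ≤ 1 → 0 ≤ d2 → d2 ≤ 1 →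
      (m.1 + d1, m.2 + d2) ∈ Kx := by
    intro m hm d1 d2 h1 h2 h3 h4
    rw [hBx, Finset.mem_product, Finset.mem_Icc, Finset.mem_Icc] at hm
    rw [hKx, Finset.mem_product, Finset.mem_Icc, Finset.mem_Icc]
    omega
  set u : (Fin 2 → ℝ) → Fin 3 → ℝ := interp v h Kx with hudef
  have hucont : Continuous u := continuous_interp v h Kx
  have cell : ∀ m, m ∈ Bx → ∀ σ : Bool,
      ∃ (Ξ : Matrix (Fin 3) (Fin 2) ℝ) (a : Fin 3 → ℝ),
        (∀ x ∈ cCell h m σ, interp v h Kx x = Ξ.mulVec x + a) ∧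
        ((∃ w ∈ cCell h m σ, ‖w‖ ≤ R + 1) →
          ∀ x' ∈ cCell h m σ, ∀ (i : Fin 3) (j : Fin 2), |Ξ i j - grad v x' i j| ≤ ε) ∧
        ((∃ w ∈ cCell h m σ, ‖w‖ ≤ R + 1) →
          ∀ x' ∈ cCell h m σ, ‖interp v h Kx x' - v x'‖ ≤ 3 * M * h) :=
    fun m hm σ => cellAff v hv1 hh hh1 hR1 hM0 hM hδεuc hhδε Kx m σ (hvertsK m hm)
  choose Ξf af hP1 hP2 hP3 using cell
  set G : Set (Fin 2 → ℝ) := {x | (∃ k : ℤ, x 0 = h * k) ∨ (∃ k : ℤ, x 1 = h * k)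
    ∨ (∃ k : ℤ, x 0 - x 1 = h * k)} with hGdef
  have hGnull : volume G = 0 := grid_null
  have hcellx : ∀ x ∈ S, x ∉ G → ∃ m σ, m ∈ Bx ∧ x ∈ oCell h m σ := by
    intro x hxS hxG
    rw [hGdef, Set.mem_setOf_eq, not_or, not_or] at hxG
    obtain ⟨g1, g2, g3⟩ := hxG
    push_neg at g1 g2 g3
    obtain ⟨σ, hσmem⟩ := mem_oCell_floor hh x g1 g2 g3
    refine ⟨(⌊x 0 / h⌋, ⌊x 1 / h⌋), σ, hfloorB x ?_, hσmem⟩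
    linarith [hSnorm x hxS]
  set F : Finset ((ℤ × ℤ) × Bool) := Bx ×ˢ ({false, true} : Finset Bool) with hF
  have hFmem1 : ∀ mσ ∈ F, mσ.1 ∈ Bx := by
    intro mσ hmσ
    rw [hF, Finset.mem_product] at hmσ
    exact hmσ.1
  have hFmem : ∀ m ∈ Bx, ∀ σ : Bool, (m, σ) ∈ F := by
    intro m hm σ
    rw [hF, Finset.mem_product]
    exact ⟨hm, by cases σ <;> simp⟩
  refine ⟨u, ⟨hucont.continuousOn, ?_⟩, ?_, ?_⟩
  · -- piecewise affine structure
    refine ⟨F.card, fun i => oCell h ((F.equivFin.symm i).1).1 ((F.equivFin.symm i).1).2 ∩ S,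
      fun i => ⟨(isOpen_oCell _ _ _).inter hSopen, Set.inter_subset_right⟩, ?_, ?_, ?_⟩
    · intro i j hij
      rw [Function.onFun, Set.disjoint_left]
      intro x hxi hxj
      have he := oCell_eq hxi.1 hxj.1
      exact hij (F.equivFin.symm.injective (Subtype.ext (Prod.ext he.1 he.2)))
    · refine measure_mono_null ?_ hGnull
      intro x hx
      obtain ⟨hxS, hxU⟩ := hx
      by_contra hxG
      obtain ⟨m, σ, hmB, hmo⟩ := hcellx x hxS hxG
      apply hxU
      refine Set.mem_iUnion.2 ⟨F.equivFin ⟨(m, σ), hFmem m hmB σ⟩, ?_⟩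
      rw [Equiv.symm_apply_apply]
      exact ⟨hmo, hxS⟩
    · intro i
      have hmB : ((F.equivFin.symm i).1).1 ∈ Bx := hFmem1 _ (F.equivFin.symm i).2
      refine ⟨Ξf _ hmB ((F.equivFin.symm i).1).2, af _ hmB ((F.equivFin.symm i).1).2, ?_⟩
      intro x hx
      exact hP1 _ hmB _ x (oCell_subset_cCell _ _ _ hx.1)
  · -- local injectivity
    intro x hxS
    refine ⟨δ₁ / 2, by positivity, ?_⟩
    intro y hy z hz hyz
    have hxK : x ∈ K := hmemK x (by linarith [hSnorm x hxS])
    set ξM : Matrix (Fin 3) (Fin 2) ℝ := grad v x with hξM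
    set f : (Fin 2 → ℝ) → Fin 3 → ℝ := fun w => u w - ξM.mulVec w with hfdef
    have hfc : Continuous f := hucont.sub (continuous_mulVec ξM)
    set CC : Finset (Set (Fin 2 → ℝ)) := (F.filter
      (fun mσ => (cCell h mσ.1 mσ.2 ∩ Metric.ball x (δ₁ / 2)).Nonempty)).image
      (fun mσ => cCell h mσ.1 mσ.2) with hCC
    have hconvC : ∀ c ∈ CC, Convex ℝ c := by
      intro c hc
      rw [hCC, Finset.mem_image] at hc
      obtain ⟨mσ, _, rfl⟩ := hc
      exact convex_cCell _ _ _
    have hlipC : ∀ c ∈ CC, ∀ a' ∈ c, ∀ b' ∈ c, ‖f a' - f b'‖ ≤ (σ₀ / 2) * ‖a' - b'‖ := by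
      intro c hc a' ha' b' hb'
      rw [hCC, Finset.mem_image] at hc
      obtain ⟨mσ, hmσ, rfl⟩ := hc
      rw [Finset.mem_filter] at hmσ
      obtain ⟨w₀, hw₀c, hw₀b⟩ := hmσ.2
      have hmB : mσ.1 ∈ Bx := hFmem1 _ hmσ.1
      have hw₀x : dist w₀ x < δ₁ / 2 := Metric.mem_ball.1 hw₀b
      have hw₀n : ‖w₀‖ ≤ R + 1 := by
        calc ‖w₀‖ = ‖(w₀ - x) + x‖ := by rw [sub_add_cancel]
          _ ≤ ‖w₀ - x‖ + ‖x‖ := norm_add_le _ _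
          _ ≤ δ₁ / 2 + R := by
              rw [← dist_eq_norm]
              have := hSnorm x hxS
              linarith
          _ ≤ R + 1 := by linarith
      have hex : ∃ w ∈ cCell h mσ.1 mσ.2, ‖w‖ ≤ R + 1 := ⟨w₀, hw₀c, hw₀n⟩
      have hw₀K : w₀ ∈ K := hmemK w₀ (by linarith)
      have hent : ∀ (i : Fin 3) (j : Fin 2), |Ξf mσ.1 hmB mσ.2 i j - ξM i j| ≤ σ₀ / 4 := by
        intro i j
        have h1 := hP2 mσ.1 hmB mσ.2 hex w₀ hw₀c i j
        have hop : ‖fderiv ℝ v w₀ - fderiv ℝ v x‖ ≤ σ₀ / 8 := by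
          refine hδ₁'uc w₀ hw₀K x hxK ?_
          linarith [hw₀x.le, hδ₁le]
        have h2 : |grad v w₀ i j - grad v x i j| ≤ σ₀ / 8 := by
          have e : grad v w₀ i j - grad v x i j
              = ((fderiv ℝ v w₀ - fderiv ℝ v x) ((Pi.single j 1 : Fin 2 → ℝ))) i := by
            rw [ContinuousLinearMap.sub_apply, Pi.sub_apply]
            rfl
          rw [e]
          calc |((fderiv ℝ v w₀ - fderiv ℝ v x) ((Pi.single j 1 : Fin 2 → ℝ))) i|
              ≤ ‖(fderiv ℝ v w₀ - fderiv ℝ v x) ((Pi.single j 1 : Fin 2 → ℝ))‖ := by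
                simpa [Real.norm_eq_abs] using
                  norm_le_pi_norm ((fderiv ℝ v w₀ - fderiv ℝ v x)
                    ((Pi.single j 1 : Fin 2 → ℝ))) i
            _ ≤ ‖fderiv ℝ v w₀ - fderiv ℝ v x‖ * ‖(Pi.single j 1 : Fin 2 → ℝ)‖ :=
                ContinuousLinearMap.le_opNorm _ _
            _ = ‖fderiv ℝ v w₀ - fderiv ℝ v x‖ := by rw [Pi.norm_single, norm_one, mul_one]
            _ ≤ σ₀ / 8 := hop
        calc |Ξf mσ.1 hmB mσ.2 i j - ξM i j|
            ≤ |Ξf mσ.1 hmB mσ.2 i j - grad v w₀ i j| + |grad v w₀ i j - ξM i j| :=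
              abs_sub_le _ _ _
          _ ≤ σ₀ / 4 := by
              rw [hξM]
              linarith [h1, h2, hεσ]
      have e1 : f a' - f b' = (Ξf mσ.1 hmB mσ.2 - ξM).mulVec (a' - b') := by
        have ua := hP1 mσ.1 hmB mσ.2 a' ha'
        have ub := hP1 mσ.1 hmB mσ.2 b' hb'
        simp only [hfdef]
        rw [← hudef] at ua ub
        rw [ua, ub, Matrix.sub_mulVec, Matrix.mulVec_sub, Matrix.mulVec_sub]
        abel
      rw [e1]
      calc ‖(Ξf mσ.1 hmB mσ.2 - ξM).mulVec (a' - b')‖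
          ≤ 2 * (σ₀ / 4) * ‖a' - b'‖ :=
            mulVec_norm_bound (fun i j => by
              simpa [Matrix.sub_apply] using hent i j) (a' - b')
        _ = (σ₀ / 2) * ‖a' - b'‖ := by ring
    have hcovC : ∀ t : ℝ, t ∈ Set.Icc (0 : ℝ) 1 → ∃ c ∈ CC, y + t • (z - y) ∈ c := by
      intro t ht
      have hwmem : y + t • (z - y) ∈ Metric.ball x (δ₁ / 2) := by
        have e : y + t • (z - y) = (1 - t) • y + t • z := by
          rw [smul_sub, sub_smul, one_smul]
          abel
        rw [e]
        exact (convex_ball x (δ₁ / 2)) hy.1 hz.1 (by linarith [ht.2]) ht.1 (by ring)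
      set w : Fin 2 → ℝ := y + t • (z - y) with hwdef
      have hwn : ‖w‖ ≤ R + 1 := by
        calc ‖w‖ = ‖(w - x) + x‖ := by rw [sub_add_cancel]
          _ ≤ ‖w - x‖ + ‖x‖ := norm_add_le _ _
          _ ≤ δ₁ / 2 + R := by
              rw [← dist_eq_norm]
              have := hSnorm x hxS
              linarith [(Metric.mem_ball.1 hwmem).le]
          _ ≤ R + 1 := by linarith
      obtain ⟨σw, hσw⟩ := mem_cCell_floor (h := h) w
      have hmB : (⌊w 0 / h⌋, ⌊w 1 / h⌋) ∈ Bx := hfloorB w (by linarith)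
      refine ⟨cCell h (⌊w 0 / h⌋, ⌊w 1 / h⌋) σw, ?_, hσw⟩
      rw [hCC, Finset.mem_image]
      exact ⟨((⌊w 0 / h⌋, ⌊w 1 / h⌋), σw),
        Finset.mem_filter.2 ⟨hFmem _ hmB σw, ⟨w, hσw, hwmem⟩⟩, rfl⟩
    have hseg := seg_lemma hfc (by positivity) CC hconvC hlipC y z hcovC
    have hfzy : f z - f y = -(ξM.mulVec (z - y)) := by
      simp only [hfdef]
      rw [← hyz, Matrix.mulVec_sub]
      abel
    have hlow := hσ x (subset_closure hxS) (z - y)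
    rw [hfzy, norm_neg] at hseg
    rw [← hξM] at hlow
    have hz0 : ‖z - y‖ ≤ 0 := by nlinarith [norm_nonneg (z - y)]
    have : z - y = 0 := by rwa [← norm_le_zero_iff]
    exact (sub_eq_zero.1 this).symm
  · -- a.e. bounds
    have hptwise : ∀ x ∈ S, x ∉ G → ‖u x - v x‖ ≤ ε ∧ ‖grad u x - grad v x‖ ≤ ε := by
      intro x hxS hxG
      obtain ⟨m, σ, hmB, hmo⟩ := hcellx x hxS hxG
      have hxc : x ∈ cCell h m σ := oCell_subset_cCell _ _ _ hmo
      have hxn : ‖x‖ ≤ R + 1 := by linarith [hSnorm x hxS]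
      have hex : ∃ w ∈ cCell h m σ, ‖w‖ ≤ R + 1 := ⟨x, hxc, hxn⟩
      constructor
      · exact le_trans (hP3 m hmB σ hex x hxc) hhε3
      · have hgeq : grad u x = Ξf m hmB σ := by
          have heve : u =ᶠ[nhds x] (fun w => (Ξf m hmB σ).mulVec w + af m hmB σ) := by
            refine Filter.eventuallyEq_of_mem ((isOpen_oCell h m σ).mem_nhds hmo) ?_
            intro w hw
            exact hP1 m hmB σ w (oCell_subset_cCell _ _ _ hw)
          rw [grad_congr heve, grad_aff]
        rw [hgeq]
        refine (Matrix.norm_le_iff hε.le).2 fun i j => ?_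
        have := hP2 m hmB σ hex x hxc i j
        simpa [Matrix.sub_apply, Real.norm_eq_abs] using this
    rw [MeasureTheory.ae_iff]
    refine measure_mono_null ?_ hGnull
    intro x hx
    rw [Set.mem_setOf_eq, Classical.not_imp] at hx
    by_contra hxG
    exact hx.2 (hptwise x hx.1 hxG)


end PA5

/-- Proposition A.5 (Trabelsi): every `v ∈ C¹_*(Σ̄;ℝ³)` is the `W^{1,p}`-limit of a sequence
of locally injective Ekeland–Temam continuous piecewise affine maps `v_n ∈ Aff^{ET}_li(Σ;ℝ³)`.
(The hypothesis `volume (frontier S) = 0` stands in for the Lipschitz regularity of `∂Σ`.) -/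
theorem c1star_approx_by_affET
    (p : ℝ) (hp : 1 < p)
    (S : Set (Fin 2 → ℝ)) (hSopen : IsOpen S) (hSbdd : Bornology.IsBounded S)
    (hSreg : volume (frontier S) = 0)
    (v : (Fin 2 → ℝ) → (Fin 3 → ℝ)) (hv : C1star S v) :
    ∃ vn : ℕ → (Fin 2 → ℝ) → (Fin 3 → ℝ),
      (∀ n, IsAffET S (vn n) ∧ LocInjOn S (vn n)) ∧
      Tendsto (fun n => ∫⁻ x in S, (‖vn n x - v x‖₊ : ℝ≥0∞) ^ p) atTop (nhds 0) ∧
      Tendsto (fun n => ∫⁻ x in S, (‖grad (vn n) x - grad v x‖₊ : ℝ≥0∞) ^ p) atTop (nhds 0) := by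
  classical
  by_cases hSne : S.Nonempty
  · obtain ⟨σ₀, hσ₀, hkey⟩ := PA5.key S hSopen hSbdd hSne v hv.1 hv.2
    set ε : ℕ → ℝ := fun n => min (1 / (n + 1)) (σ₀ / 8) with hεdef
    have hεpos : ∀ n, 0 < ε n := fun n => lt_min (by positivity) (by positivity)
    have hεle : ∀ n, ε n ≤ σ₀ / 8 := fun n => min_le_right _ _
    have hεn : ∀ n : ℕ, ε n ≤ 1 / (n + 1) := fun n => min_le_left _ _
    have hε1 : ∀ n : ℕ, ε n ≤ 1 := by
      intro n
      refine le_trans (hεn n) ?_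
      rw [div_le_one (by positivity)]
      linarith [Nat.cast_nonneg (α := ℝ) n]
    choose u hu1 hu2 hu3 using fun n => hkey (ε n) (hεpos n) (hεle n)
    have hvolS : volume S ≠ ⊤ := by
      have hSclc : IsCompact (closure S) :=
        Metric.isCompact_of_isClosed_isBounded isClosed_closure hSbdd.closure
      exact ne_of_lt (lt_of_le_of_lt (measure_mono subset_closure) hSclc.measure_lt_top)
    have squeeze : ∀ F : ℕ → (Fin 2 → ℝ) → ℝ≥0∞,
        (∀ n, ∀ᵐ x ∂(volume.restrict S), F n x ≤ ENNReal.ofReal (1 / (n + 1))) →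
        Tendsto (fun n => ∫⁻ x in S, F n x) atTop (nhds 0) := by
      intro F hF
      have hb : ∀ n, ∫⁻ x in S, F n x ≤ ENNReal.ofReal (1 / (n + 1)) * volume S := by
        intro n
        calc ∫⁻ x in S, F n x ≤ ∫⁻ _x in S, ENNReal.ofReal (1 / (n + 1)) :=
              lintegral_mono_ae (hF n)
          _ = ENNReal.ofReal (1 / (n + 1)) * volume S := setLIntegral_const _ _
      have h0 : Tendsto (fun n : ℕ => ENNReal.ofReal (1 / (n + 1))) atTop
          (nhds (ENNReal.ofReal 0)) :=
        ENNReal.tendsto_ofReal tendsto_one_div_add_atTop_nhds_zero_nat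
      have h1 : Tendsto (fun n : ℕ => ENNReal.ofReal (1 / (n + 1)) * volume S) atTop
          (nhds 0) := by
        have := ENNReal.Tendsto.mul_const h0 (Or.inr hvolS)
        simpa using this
      exact tendsto_of_tendsto_of_tendsto_of_le_of_le tendsto_const_nhds h1
        (fun n => zero_le) hb
    have hptw : ∀ n, ∀ᵐ x ∂(volume.restrict S),
        ‖u n x - v x‖ ≤ ε n ∧ ‖grad (u n) x - grad v x‖ ≤ ε n := by
      intro n
      have h1 := ae_restrict_of_ae (μ := volume) (s := S) (hu3 n)
      have h2 := ae_restrict_mem (μ := volume) hSopen.measurableSet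
      filter_upwards [h1, h2] with x hx1 hx2
      exact hx1 hx2
    have hconv : ∀ (w : Fin 2 → ℝ) (wn : ℝ) (n : ℕ), ‖w‖₊ = wn → True := fun _ _ _ _ => trivial
    have hstep : ∀ (n : ℕ) (a : ℝ), ‖a‖ = a → True := fun _ _ _ => trivial
    refine ⟨u, fun n => ⟨hu1 n, hu2 n⟩, ?_, ?_⟩
    · refine squeeze _ fun n => ?_
      filter_upwards [hptw n] with x hx
      calc ((‖u n x - v x‖₊ : ℝ≥0∞)) ^ p ≤ (ENNReal.ofReal (ε n)) ^ p := by
            refine ENNReal.rpow_le_rpow ?_ (by linarith)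
            rw [← ENNReal.ofReal_coe_nnreal, coe_nnnorm]
            exact ENNReal.ofReal_le_ofReal hx.1
        _ ≤ (ENNReal.ofReal (ε n)) ^ (1 : ℝ) := by
            refine ENNReal.rpow_le_rpow_of_exponent_ge ?_ hp.le
            rw [ENNReal.ofReal_le_one]
            exact hε1 n
        _ = ENNReal.ofReal (ε n) := ENNReal.rpow_one _
        _ ≤ ENNReal.ofReal (1 / (n + 1)) := ENNReal.ofReal_le_ofReal (hεn n)
    · refine squeeze _ fun n => ?_
      filter_upwards [hptw n] with x hx
      calc ((‖grad (u n) x - grad v x‖₊ : ℝ≥0∞)) ^ p ≤ (ENNReal.ofReal (ε n)) ^ p := by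
            refine ENNReal.rpow_le_rpow ?_ (by linarith)
            rw [← ENNReal.ofReal_coe_nnreal, coe_nnnorm]
            exact ENNReal.ofReal_le_ofReal hx.2
        _ ≤ (ENNReal.ofReal (ε n)) ^ (1 : ℝ) := by
            refine ENNReal.rpow_le_rpow_of_exponent_ge ?_ hp.le
            rw [ENNReal.ofReal_le_one]
            exact hε1 n
        _ = ENNReal.ofReal (ε n) := ENNReal.rpow_one _
        _ ≤ ENNReal.ofReal (1 / (n + 1)) := ENNReal.ofReal_le_ofReal (hεn n)
  · rw [Set.not_nonempty_iff_eq_empty] at hSne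
    subst hSne
    refine ⟨fun _ => v, fun n => ⟨⟨continuousOn_empty v, 0, Fin.elim0, fun i => i.elim0,
      fun i => i.elim0, by simp, fun i => i.elim0⟩,
      fun x hx => absurd hx (Set.notMem_empty x)⟩, ?_, ?_⟩ <;>
    · have e : ∀ F : (Fin 2 → ℝ) → ℝ≥0∞, ∫⁻ x in (∅ : Set (Fin 2 → ℝ)), F x = 0 := by
        intro F
        rw [Measure.restrict_empty, lintegral_zero_measure]
      simp only [e]
      exact tendsto_const_nhds
end
end

section
/- Define R_0 W_0 := W_0 and, for i ≥ 0 and ξ ∈ M^{3×2}, R_{i+1}W_0(ξ) := inf{ (1-t) R_i W_0(ξ - t a⊗b) + t R_i W_0(ξ + (1-t) a⊗b) : a ∈ ℝ², b ∈ ℝ³, t ∈ [0,1] }. Then for every i ≥ 0 and every ξ ∈ M^{3×2} with rank(ξ) = 2, the infimum defining R_{i+1}W_0(ξ) is attained: there exist a ∈ ℝ², b ∈ ℝ³ and t ∈ [0,1] such that R_{i+1}W_0(ξ) = (1-t) R_i W_0(ξ - t a⊗b) + t R_i W_0(ξ + (1-t) a⊗b). -/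
open scoped ENNReal
open MeasureTheory Filter

noncomputable section

attribute [local instance] Matrix.normedAddCommGroup

/-- The Kohn–Strang sequence: `R₀W₀ := W₀` and
`R_{i+1}W₀(ξ) := inf { (1-t) RᵢW₀(ξ - t a⊗b) + t RᵢW₀(ξ + (1-t) a⊗b) :
a ∈ ℝ², b ∈ ℝ³, t ∈ [0,1] }`, where `a⊗b` is the rank-one 3×2 matrix `b aᵀ`. -/
def Rseq (f : Matrix (Fin 3) (Fin 2) ℝ → ℝ≥0∞) : ℕ → Matrix (Fin 3) (Fin 2) ℝ → ℝ≥0∞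
  | 0 => f
  | (i + 1) => fun ξ =>
      ⨅ (a : Fin 2 → ℝ) (b : Fin 3 → ℝ) (t : ℝ) (_ : t ∈ Set.Icc (0 : ℝ) 1),
        ENNReal.ofReal (1 - t) * Rseq f i (ξ - t • Matrix.vecMulVec b a) +
          ENNReal.ofReal t * Rseq f i (ξ + (1 - t) • Matrix.vecMulVec b a)

/-!
Write `E(ξ, η, t) = (1 - t) g(ξ - t η) + t g(ξ + (1 - t) η)` for the energy of a simple laminate,
so that `R_{i+1} g(ξ)` is the infimum of `E(ξ, η, t)` over rank-one `η` and `t ∈ [0, 1]`. By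
induction on `i`, every `Rᵢ W₀` is lower semicontinuous and bounded below by `C |·|^p`: for `W₀`
both come from the coercivity of `W` in the third column, and the bound passes to `R_{i+1}` by
convexity of `|·|^p`.

For such `g`, `E` is jointly lower semicontinuous and the rank-one matrices form a closed set.
Along a minimizing sequence `(ηₙ, tₙ)` with `tₙ → t₀`: if `0 < t₀ < 1`, coercivity bounds `ηₙ` and
a subsequence converges to a minimizer; if `t₀ = 0`, boundedness of `tₙ |ηₙ|^p` together with
`p > 1` forces `tₙ ηₙ → 0`, so the infimum is at least `g(ξ) = E(ξ, η, 0)`; `t₀ = 1` is symmetric.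
The same argument along a sequence `ξₙ → ξ` gives the lower semicontinuity of `R_{i+1} g`.
-/

open Set Topology

attribute [local instance] Matrix.normedSpace

section Semicontinuity

variable {α : Type*} [TopologicalSpace α]

lemma lowerSemicontinuous_ofReal_mul {f : α → ℝ} {g : α → ℝ≥0∞} (hf : Continuous f)
    (hg : LowerSemicontinuous g) :
    LowerSemicontinuous fun x => ENNReal.ofReal (f x) * g x := by
  intro x y hy
  have hfx : ENNReal.ofReal (f x) ≠ 0 := left_ne_zero_of_mul (hy.trans_le' bot_le).ne'
  have hdiv := ENNReal.div_lt_iff (a := g x) (c := y) (Or.inl hfx) (Or.inl ENNReal.ofReal_ne_top)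
  obtain ⟨z, hyz, hzg⟩ := exists_between (hdiv.2 (by rwa [mul_comm]))
  have hyz' : y < ENNReal.ofReal (f x) * z := by
    rwa [ENNReal.div_lt_iff (Or.inl hfx) (Or.inl ENNReal.ofReal_ne_top), mul_comm] at hyz
  have hcont : Continuous fun x' => ENNReal.ofReal (f x') * z :=
    (ENNReal.continuous_mul_const hzg.ne_top).comp (ENNReal.continuous_ofReal.comp hf)
  filter_upwards [continuousAt_const.eventually_lt hcont.continuousAt hyz', hg x z hzg]
    with x' h1 h2
  exact h1.trans_le (by gcongr)

lemma LowerSemicontinuous.le_of_tendsto {γ ι : Type*} [LinearOrder γ] [DenselyOrdered γ]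
    [TopologicalSpace γ] [OrderTopology γ] {F : α → γ} (hF : LowerSemicontinuous F)
    {l : Filter ι} [l.NeBot] {x : ι → α} {q : α} (hx : Tendsto x l (𝓝 q)) {M : ι → γ} {L : γ}
    (hM : Tendsto M l (𝓝 L)) (hle : ∀ᶠ i in l, F (x i) ≤ M i) : F q ≤ L := by
  refine le_of_forall_lt_imp_le_of_dense fun y hy => ge_of_tendsto hM ?_
  filter_upwards [hx.eventually (hF q y hy), hle] with i h1 h2
  exact h1.le.trans h2

lemma lowerSemicontinuous_of_tendsto_le [SequentialSpace α] {f : α → ℝ≥0∞}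
    (h : ∀ (x : ℕ → α) (a : α) (y : ℝ≥0∞), y ≠ ⊤ → Tendsto x atTop (𝓝 a) →
      (∀ n, f (x n) ≤ y) → f a ≤ y) :
    LowerSemicontinuous f := by
  refine lowerSemicontinuous_iff_isClosed_preimage.2 fun y => ?_
  rcases eq_or_ne y ⊤ with rfl | hy
  · simp
  exact IsSeqClosed.isClosed fun x a hx hxa => h x a y hy hxa hx

end Semicontinuity

lemma lowerSemicontinuous_iInf_of_norm_le {α F : Type*} [PseudoMetricSpace α]
    [NormedAddCommGroup F] [ProperSpace F] {G : α × F → ℝ≥0∞} (hG : LowerSemicontinuous G)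
    (hbdd : ∀ y ≠ ⊤, ∃ R, ∀ x z, G (x, z) ≤ y → ‖z‖ ≤ R) :
    LowerSemicontinuous fun x => ⨅ z, G (x, z) := by
  refine lowerSemicontinuous_of_tendsto_le fun xs a y hy hxa hle => ?_
  have hnear : ∀ n : ℕ, ∃ z, G (xs n, z) < y + (n : ℝ≥0∞)⁻¹ := fun n =>
    iInf_lt_iff.1 ((hle n).trans_lt
      (ENNReal.lt_add_right hy (ENNReal.inv_ne_zero.2 (ENNReal.natCast_ne_top n))))
  choose zs hzs using hnear
  obtain ⟨R, hR⟩ := hbdd (y + 1) (by finiteness)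
  have hbdd' : ∀ᶠ n in atTop, zs n ∈ Metric.closedBall 0 R := by
    filter_upwards [eventually_ge_atTop 1] with n hn
    refine mem_closedBall_zero_iff.2 (hR _ _ ((hzs n).le.trans ?_))
    gcongr
    exact ENNReal.inv_le_one.2 (by exact_mod_cast hn)
  obtain ⟨z, -, ψ, hψ, hzψ⟩ :=
    tendsto_subseq_of_frequently_bounded Metric.isBounded_closedBall hbdd'.frequently
  have hψ' := hψ.tendsto_atTop
  have hM : Tendsto (fun n => y + ((ψ n : ℕ) : ℝ≥0∞)⁻¹) atTop (𝓝 y) := by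
    simpa using tendsto_const_nhds.add (ENNReal.tendsto_inv_nat_nhds_zero.comp hψ')
  exact (iInf_le _ z).trans (hG.le_of_tendsto ((hxa.comp hψ').prodMk_nhds hzψ) hM
    (.of_forall fun n => (hzs (ψ n)).le))

lemma ENNReal.exists_eventually_le_ofReal {ι : Type*} {l : Filter ι} {f M : ι → ℝ≥0∞}
    {L : ℝ≥0∞} (hM : Tendsto M l (𝓝 L)) (hL : L ≠ ⊤) (hle : ∀ᶠ i in l, f i ≤ M i) :
    ∃ K : ℝ, 0 ≤ K ∧ ∀ᶠ i in l, f i ≤ ENNReal.ofReal K := by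
  refine ⟨(L + 1).toReal, ENNReal.toReal_nonneg, ?_⟩
  rw [ENNReal.ofReal_toReal (by finiteness)]
  filter_upwards [hle, hM.eventually_le_const (ENNReal.lt_add_right hL one_ne_zero)]
    with i h1 h2 using h1.trans h2

lemma tendsto_smul_zero_of_mul_rpow_le {E ι : Type*} [NormedAddCommGroup E] [NormedSpace ℝ E]
    {l : Filter ι} {p K : ℝ} (hp : 1 < p) {s : ι → ℝ} {v : ι → E} (hs0 : ∀ᶠ i in l, 0 ≤ s i)
    (hs : Tendsto s l (𝓝 0)) (hv : ∀ᶠ i in l, s i * ‖v i‖ ^ p ≤ K) :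
    Tendsto (fun i => s i • v i) l (𝓝 0) := by
  have hp0 : 0 < p := by linarith
  have hbound : ∀ᶠ i in l, ‖s i • v i‖ ≤ (s i ^ (p - 1) * max K 0) ^ p⁻¹ := by
    filter_upwards [hs0, hv] with i hsi hvi
    have hpow : ‖s i • v i‖ ^ p = s i ^ (p - 1) * (s i * ‖v i‖ ^ p) := by
      rw [norm_smul, Real.norm_of_nonneg hsi, Real.mul_rpow hsi (norm_nonneg _), ← mul_assoc,
        ← Real.rpow_add_one' hsi (by linarith), sub_add_cancel]
    rw [Real.le_rpow_inv_iff_of_pos (norm_nonneg _) (by positivity) hp0, hpow]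
    gcongr
    exact hvi.trans (le_max_left _ _)
  refine squeeze_zero_norm' hbound ?_
  have hcont : Continuous fun s : ℝ => (s ^ (p - 1) * max K 0) ^ p⁻¹ :=
    ((continuous_id.rpow_const fun _ => Or.inr (by linarith)).mul continuous_const).rpow_const
      fun _ => Or.inr (by positivity)
  simpa [Function.comp_def, Real.zero_rpow (by linarith : p - 1 ≠ 0),
    Real.zero_rpow (inv_ne_zero hp0.ne')] using (hcont.tendsto 0).comp hs

def Coercive {E : Type*} [Norm E] (p C : ℝ) (g : E → ℝ≥0∞) : Prop :=
  ∀ x, ENNReal.ofReal (C * ‖x‖ ^ p) ≤ g x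

section Laminate

variable {E : Type*} [NormedAddCommGroup E] [NormedSpace ℝ E]

def laminateEnergy (g : E → ℝ≥0∞) (ξ η : E) (t : ℝ) : ℝ≥0∞ :=
  ENNReal.ofReal (1 - t) * g (ξ - t • η) + ENNReal.ofReal t * g (ξ + (1 - t) • η)

def laminateInf (g : E → ℝ≥0∞) (Λ : Set E) (ξ : E) : ℝ≥0∞ :=
  ⨅ η ∈ Λ, ⨅ t ∈ Icc (0 : ℝ) 1, laminateEnergy g ξ η t

variable {g : E → ℝ≥0∞} {Λ : Set E} {p C : ℝ}

lemma convexOn_norm_rpow (hp : 1 ≤ p) : ConvexOn ℝ univ fun x : E => ‖x‖ ^ p := by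
  refine ⟨convex_univ, fun x _ y _ a b ha hb hab => ?_⟩
  calc ‖a • x + b • y‖ ^ p ≤ (a * ‖x‖ + b * ‖y‖) ^ p := by
        gcongr
        simpa [norm_smul, abs_of_nonneg ha, abs_of_nonneg hb] using norm_add_le (a • x) (b • y)
    _ ≤ a • ‖x‖ ^ p + b • ‖y‖ ^ p :=
        (convexOn_rpow hp).2 (norm_nonneg x) (norm_nonneg y) ha hb hab

@[simp]
lemma laminateEnergy_zero (g : E → ℝ≥0∞) (ξ η : E) : laminateEnergy g ξ η 0 = g ξ := by
  simp [laminateEnergy]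

@[simp]
lemma laminateEnergy_one (g : E → ℝ≥0∞) (ξ η : E) : laminateEnergy g ξ η 1 = g ξ := by
  simp [laminateEnergy]

lemma laminateEnergy_neg_one_sub (g : E → ℝ≥0∞) (ξ η : E) (t : ℝ) :
    laminateEnergy g ξ (-η) (1 - t) = laminateEnergy g ξ η t := by
  simp only [laminateEnergy, sub_sub_cancel, smul_neg, sub_neg_eq_add, ← sub_eq_add_neg]
  exact add_comm _ _

lemma laminateInf_le {ξ η : E} {t : ℝ} (hη : η ∈ Λ) (ht : t ∈ Icc (0 : ℝ) 1) :
    laminateInf g Λ ξ ≤ laminateEnergy g ξ η t :=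
  iInf₂_le_of_le η hη (iInf₂_le t ht)

lemma lowerSemicontinuous_laminateEnergy (hg : LowerSemicontinuous g) :
    LowerSemicontinuous fun q : E × E × ℝ => laminateEnergy g q.1 q.2.1 q.2.2 :=
  (lowerSemicontinuous_ofReal_mul (by fun_prop) (hg.comp (by fun_prop))).add
    (lowerSemicontinuous_ofReal_mul (by fun_prop) (hg.comp (by fun_prop)))

lemma ofReal_le_laminateEnergy (hgc : Coercive p C g) (hp : 1 ≤ p) (hC : 0 ≤ C) (ξ η : E)
    {t : ℝ} (ht : t ∈ Icc (0 : ℝ) 1) :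
    ENNReal.ofReal (C * ‖ξ‖ ^ p) ≤ laminateEnergy g ξ η t := by
  have h1t : 0 ≤ 1 - t := by linarith [ht.2]
  have hξ : ξ = (1 - t) • (ξ - t • η) + t • (ξ + (1 - t) • η) := by module
  have hconv : ‖ξ‖ ^ p ≤ (1 - t) * ‖ξ - t • η‖ ^ p + t * ‖ξ + (1 - t) • η‖ ^ p := by
    have := (convexOn_norm_rpow hp).2 (mem_univ (ξ - t • η))
      (mem_univ (ξ + (1 - t) • η)) h1t ht.1 (by ring)
    simpa only [← hξ, smul_eq_mul] using this
  calc ENNReal.ofReal (C * ‖ξ‖ ^ p)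
      ≤ ENNReal.ofReal ((1 - t) * (C * ‖ξ - t • η‖ ^ p) + t * (C * ‖ξ + (1 - t) • η‖ ^ p)) :=
        ENNReal.ofReal_le_ofReal (by nlinarith [mul_le_mul_of_nonneg_left hconv hC])
    _ ≤ ENNReal.ofReal (1 - t) * g (ξ - t • η) + ENNReal.ofReal t * g (ξ + (1 - t) • η) := by
        rw [ENNReal.ofReal_add (by positivity) (mul_nonneg ht.1 (by positivity)),
          ENNReal.ofReal_mul h1t, ENNReal.ofReal_mul ht.1]
        gcongr <;> exact hgc _

lemma coercive_laminateInf (hgc : Coercive p C g) (hp : 1 ≤ p) (hC : 0 ≤ C) :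
    Coercive p C (laminateInf g Λ) := fun ξ =>
  le_iInf₂ fun η _ => le_iInf₂ fun _ ht => ofReal_le_laminateEnergy hgc hp hC ξ η ht

lemma mul_norm_rpow_le_of_laminateEnergy_le (hgc : Coercive p C g) {ξ η : E} {t K : ℝ}
    (ht : t ∈ Icc (0 : ℝ) 1) (hK : 0 ≤ K) (h : laminateEnergy g ξ η t ≤ ENNReal.ofReal K) :
    (1 - t) * (C * ‖ξ - t • η‖ ^ p) ≤ K ∧ t * (C * ‖ξ + (1 - t) • η‖ ^ p) ≤ K := by
  rw [← ENNReal.ofReal_le_ofReal_iff hK, ← ENNReal.ofReal_le_ofReal_iff hK,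
    ENNReal.ofReal_mul (by linarith [ht.2]), ENNReal.ofReal_mul ht.1]
  exact ⟨le_trans (by gcongr; exact hgc _) ((le_add_right le_rfl).trans h),
    le_trans (by gcongr; exact hgc _) ((le_add_left le_rfl).trans h)⟩

lemma norm_le_of_laminateEnergy_le (hgc : Coercive p C g) (hp : 0 < p) (hC : 0 < C)
    {ξ η : E} {t δ K : ℝ} (hδ : 0 < δ) (ht : t ∈ Icc δ (1 - δ)) (hK : 0 ≤ K)
    (h : laminateEnergy g ξ η t ≤ ENNReal.ofReal K) :
    ‖η‖ ≤ 2 * (K / (δ * C)) ^ p⁻¹ := by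
  obtain ⟨hX, hY⟩ := mul_norm_rpow_le_of_laminateEnergy_le hgc ⟨hδ.le.trans ht.1,
    by linarith [ht.2]⟩ hK h
  have hbound : ∀ {s : ℝ} (x : E), δ ≤ s → s * (C * ‖x‖ ^ p) ≤ K →
      ‖x‖ ≤ (K / (δ * C)) ^ p⁻¹ := by
    intro s x hs hx
    rw [Real.le_rpow_inv_iff_of_pos (norm_nonneg _) (by positivity) hp,
      le_div_iff₀ (by positivity)]
    nlinarith [mul_le_mul_of_nonneg_right hs (by positivity : 0 ≤ C * ‖x‖ ^ p)]
  calc ‖η‖ = ‖(ξ + (1 - t) • η) - (ξ - t • η)‖ := by congr 1; module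
    _ ≤ ‖ξ + (1 - t) • η‖ + ‖ξ - t • η‖ := norm_sub_le _ _
    _ ≤ 2 * (K / (δ * C)) ^ p⁻¹ := by
        linarith [hbound _ ht.1 hY, hbound _ (by linarith [ht.2]) hX]

lemma le_of_tendsto_laminateEnergy_of_tendsto_zero (hg : LowerSemicontinuous g)
    (hgc : Coercive p C g) (hp : 1 < p) (hC : 0 < C) {ι : Type*} {l : Filter ι} [l.NeBot]
    {ξs ηs : ι → E} {ts : ι → ℝ} {ξ : E} {M : ι → ℝ≥0∞} {L : ℝ≥0∞}
    (hξ : Tendsto ξs l (𝓝 ξ)) (ht : ∀ i, ts i ∈ Icc (0 : ℝ) 1) (ht0 : Tendsto ts l (𝓝 0))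
    (hM : Tendsto M l (𝓝 L)) (hL : L ≠ ⊤)
    (hle : ∀ᶠ i in l, laminateEnergy g (ξs i) (ηs i) (ts i) ≤ M i) : g ξ ≤ L := by
  set X := fun i => ξs i - ts i • ηs i
  set Y := fun i => ξs i + (1 - ts i) • ηs i
  obtain ⟨K, hK, hKle⟩ := ENNReal.exists_eventually_le_ofReal hM hL hle
  have hbounds := hKle.mono fun i hi => mul_norm_rpow_le_of_laminateEnergy_le hgc (ht i) hK hi
  have hhalf : ∀ᶠ i in l, ts i ≤ 1 / 2 := ht0.eventually (eventually_le_nhds (by norm_num))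
  -- only `t ‖Y‖ ^ p` is bounded, but superlinear growth (`p > 1`) still forces `t • Y → 0`
  have htY : Tendsto (fun i => ts i • Y i) l (𝓝 0) := by
    refine tendsto_smul_zero_of_mul_rpow_le hp (.of_forall fun i => (ht i).1) ht0
      (K := K / C) (hbounds.mono fun i hi => ?_)
    rw [le_div_iff₀ hC]
    linarith [hi.2]
  have htX : Tendsto (fun i => ts i • X i) l (𝓝 0) := by
    refine tendsto_smul_zero_of_mul_rpow_le hp (.of_forall fun i => (ht i).1) ht0
      (K := K / C) ((hbounds.and hhalf).mono fun i ⟨⟨hXi, _⟩, hti⟩ => ?_)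
    change (1 - ts i) * (C * ‖X i‖ ^ p) ≤ K at hXi
    have := mul_le_mul_of_nonneg_right (show ts i ≤ 1 - ts i by linarith)
      (by positivity : 0 ≤ C * ‖X i‖ ^ p)
    rw [le_div_iff₀ hC]
    linarith
  have hXξ : Tendsto X l (𝓝 ξ) := by
    have : Tendsto (fun i => ξs i - (ts i • Y i - ts i • X i)) l (𝓝 (ξ - (0 - 0))) :=
      hξ.sub (htY.sub htX)
    refine (by simpa using this : Tendsto _ l (𝓝 ξ)).congr fun i => ?_
    simp only [X, Y]
    module
  have hF : LowerSemicontinuous fun q : E × ℝ => ENNReal.ofReal (1 - q.2) * g q.1 :=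
    lowerSemicontinuous_ofReal_mul (by fun_prop) (hg.comp continuous_fst)
  simpa using hF.le_of_tendsto (hXξ.prodMk_nhds ht0) hM
    (hle.mono fun i hi => (le_add_right le_rfl).trans hi)

variable [ProperSpace E]

lemma exists_laminateEnergy_le_of_tendsto_mem_Ioo (hg : LowerSemicontinuous g)
    (hgc : Coercive p C g) (hp : 0 < p) (hC : 0 < C) (hΛ : IsClosed Λ) {ξs ηs : ℕ → E}
    {ts : ℕ → ℝ} {ξ : E} {t₀ : ℝ} {M : ℕ → ℝ≥0∞} {L : ℝ≥0∞} (hξ : Tendsto ξs atTop (𝓝 ξ))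
    (hη : ∀ n, ηs n ∈ Λ) (ht : Tendsto ts atTop (𝓝 t₀)) (ht₀ : t₀ ∈ Ioo (0 : ℝ) 1)
    (hM : Tendsto M atTop (𝓝 L)) (hL : L ≠ ⊤)
    (hle : ∀ n, laminateEnergy g (ξs n) (ηs n) (ts n) ≤ M n) :
    ∃ η ∈ Λ, laminateEnergy g ξ η t₀ ≤ L := by
  set δ := min t₀ (1 - t₀) / 2
  have hδ : 0 < δ := by simp only [δ]; linarith [lt_min ht₀.1 (sub_pos.2 ht₀.2)]
  have htδ : ∀ᶠ n in atTop, ts n ∈ Icc δ (1 - δ) :=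
    ht.eventually (Icc_mem_nhds (by simp only [δ]; linarith [min_le_left t₀ (1 - t₀), ht₀.1])
      (by simp only [δ]; linarith [min_le_right t₀ (1 - t₀), ht₀.2]))
  obtain ⟨K, hK, hKle⟩ := ENNReal.exists_eventually_le_ofReal hM hL (.of_forall hle)
  have hbdd : ∀ᶠ n in atTop, ηs n ∈ Metric.closedBall 0 (2 * (K / (δ * C)) ^ p⁻¹) := by
    filter_upwards [htδ, hKle] with n hn hKn
    exact mem_closedBall_zero_iff.2 (norm_le_of_laminateEnergy_le hgc hp hC hδ hn hK hKn)
  obtain ⟨η, -, ψ, hψ, hηψ⟩ :=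
    tendsto_subseq_of_frequently_bounded Metric.isBounded_closedBall hbdd.frequently
  have hψ' := hψ.tendsto_atTop
  refine ⟨η, hΛ.mem_of_tendsto hηψ (.of_forall fun n => hη _), ?_⟩
  exact (lowerSemicontinuous_laminateEnergy hg).le_of_tendsto
    ((hξ.comp hψ').prodMk_nhds (hηψ.prodMk_nhds (ht.comp hψ'))) (hM.comp hψ')
    (.of_forall fun n => hle (ψ n))

lemma exists_laminateEnergy_le_of_tendsto (hg : LowerSemicontinuous g) (hgc : Coercive p C g)
    (hp : 1 < p) (hC : 0 < C) (hΛ : IsClosed Λ) {ξs ηs : ℕ → E} {ts : ℕ → ℝ} {ξ : E}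
    {M : ℕ → ℝ≥0∞} {L : ℝ≥0∞} (hξ : Tendsto ξs atTop (𝓝 ξ)) (hη : ∀ n, ηs n ∈ Λ)
    (ht : ∀ n, ts n ∈ Icc (0 : ℝ) 1) (hM : Tendsto M atTop (𝓝 L)) (hL : L ≠ ⊤)
    (hle : ∀ n, laminateEnergy g (ξs n) (ηs n) (ts n) ≤ M n) :
    ∃ η ∈ Λ, ∃ t ∈ Icc (0 : ℝ) 1, laminateEnergy g ξ η t ≤ L := by
  obtain ⟨t₀, ht₀, φ, hφ, htφ⟩ := isCompact_Icc.tendsto_subseq ht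
  have hφ' := hφ.tendsto_atTop
  rcases ht₀.1.eq_or_lt with rfl | h0
  · refine ⟨ηs 0, hη 0, 0, left_mem_Icc.2 zero_le_one, ?_⟩
    rw [laminateEnergy_zero]
    exact le_of_tendsto_laminateEnergy_of_tendsto_zero hg hgc hp hC (hξ.comp hφ')
      (fun n => ht (φ n)) htφ (hM.comp hφ') hL (.of_forall fun n => hle (φ n))
  rcases ht₀.2.eq_or_lt with rfl | h1
  · refine ⟨ηs 0, hη 0, 1, right_mem_Icc.2 zero_le_one, ?_⟩
    rw [laminateEnergy_one]
    refine le_of_tendsto_laminateEnergy_of_tendsto_zero hg hgc hp hC (ηs := fun n => -ηs (φ n))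
      (hξ.comp hφ') (fun n => ⟨sub_nonneg.2 (ht (φ n)).2, by linarith [(ht (φ n)).1]⟩)
      (by simpa using (tendsto_const_nhds (x := (1 : ℝ))).sub htφ) (hM.comp hφ') hL
      (.of_forall fun n => ?_)
    simpa only [Function.comp_apply, laminateEnergy_neg_one_sub] using hle (φ n)
  obtain ⟨η, hηΛ, hηL⟩ := exists_laminateEnergy_le_of_tendsto_mem_Ioo hg hgc (by linarith) hC hΛ
    (hξ.comp hφ') (fun n => hη (φ n)) htφ ⟨h0, h1⟩ (hM.comp hφ') hL fun n => hle (φ n)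
  exact ⟨η, hηΛ, t₀, ht₀, hηL⟩

lemma exists_laminateEnergy_le_of_forall_laminateInf_le (hg : LowerSemicontinuous g)
    (hgc : Coercive p C g) (hp : 1 < p) (hC : 0 < C) (hΛ : IsClosed Λ) {ξs : ℕ → E} {ξ : E}
    {y : ℝ≥0∞} (hξ : Tendsto ξs atTop (𝓝 ξ)) (hy : y ≠ ⊤)
    (hle : ∀ n, laminateInf g Λ (ξs n) ≤ y) :
    ∃ η ∈ Λ, ∃ t ∈ Icc (0 : ℝ) 1, laminateEnergy g ξ η t ≤ y := by
  have hnear : ∀ n : ℕ, ∃ η ∈ Λ, ∃ t ∈ Icc (0 : ℝ) 1,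
      laminateEnergy g (ξs n) η t < y + (n : ℝ≥0∞)⁻¹ := by
    intro n
    have := (hle n).trans_lt
      (ENNReal.lt_add_right hy (ENNReal.inv_ne_zero.2 (ENNReal.natCast_ne_top n)))
    simpa only [laminateInf, iInf_lt_iff, exists_prop] using this
  choose ηs hηs ts hts hlt using hnear
  exact exists_laminateEnergy_le_of_tendsto hg hgc hp hC hΛ hξ hηs hts
    (by simpa using tendsto_const_nhds.add ENNReal.tendsto_inv_nat_nhds_zero) hy
    fun n => (hlt n).le

lemma exists_laminateInf_eq (hg : LowerSemicontinuous g) (hgc : Coercive p C g) (hp : 1 < p)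
    (hC : 0 < C) (hΛ : IsClosed Λ) (hΛne : Λ.Nonempty) (ξ : E) :
    ∃ η ∈ Λ, ∃ t ∈ Icc (0 : ℝ) 1, laminateInf g Λ ξ = laminateEnergy g ξ η t := by
  rcases eq_or_ne (laminateInf g Λ ξ) ⊤ with htop | htop
  · obtain ⟨η, hη⟩ := hΛne
    refine ⟨η, hη, 0, left_mem_Icc.2 zero_le_one, ?_⟩
    rw [htop, eq_comm, ← top_le_iff, ← htop]
    exact laminateInf_le hη (left_mem_Icc.2 zero_le_one)
  obtain ⟨η, hη, t, ht, hle⟩ := exists_laminateEnergy_le_of_forall_laminateInf_le hg hgc hp hC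
    hΛ tendsto_const_nhds htop fun _ => le_rfl
  exact ⟨η, hη, t, ht, (laminateInf_le hη ht).antisymm hle⟩

lemma lowerSemicontinuous_laminateInf (hg : LowerSemicontinuous g) (hgc : Coercive p C g)
    (hp : 1 < p) (hC : 0 < C) (hΛ : IsClosed Λ) : LowerSemicontinuous (laminateInf g Λ) :=
  lowerSemicontinuous_of_tendsto_le fun _ _ _ hy hξ hle =>
    let ⟨_, hη, _, ht, h⟩ :=
      exists_laminateEnergy_le_of_forall_laminateInf_le hg hgc hp hC hΛ hξ hy hle
    (laminateInf_le hη ht).trans h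

end Laminate

lemma Matrix.isClosed_range_vecMulVec {m n 𝕜 : Type*} [Field 𝕜] [TopologicalSpace 𝕜]
    [ContinuousMul 𝕜] [T2Space 𝕜] :
    IsClosed (range fun q : (m → 𝕜) × (n → 𝕜) => Matrix.vecMulVec q.1 q.2) := by
  -- rank-one matrices are cut out by the vanishing of all 2 × 2 minors
  have hrange : range (fun q : (m → 𝕜) × (n → 𝕜) => Matrix.vecMulVec q.1 q.2) =
      ⋂ (i) (k) (j) (l), {M : Matrix m n 𝕜 | M i j * M k l = M i l * M k j} := by
    ext M
    simp only [mem_range, mem_iInter, mem_ofPred_eq, Prod.exists]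
    constructor
    · rintro ⟨b, a, rfl⟩ i k j l
      simp only [Matrix.vecMulVec_apply]
      ring
    · intro h
      by_cases hM : ∃ i j, M i j ≠ 0
      · obtain ⟨i₀, j₀, hM⟩ := hM
        refine ⟨fun i => M i j₀, fun j => M i₀ j / M i₀ j₀, Matrix.ext fun i j => ?_⟩
        rw [Matrix.vecMulVec_apply, mul_div_assoc', div_eq_iff hM, h i i₀ j j₀]
      · simp only [not_exists, not_not] at hM
        exact ⟨0, 0, Matrix.ext fun i j => by simp [hM i j]⟩
  rw [hrange]
  exact isClosed_iInter fun i => isClosed_iInter fun k => isClosed_iInter fun j =>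
    isClosed_iInter fun l => isClosed_eq (by fun_prop) (by fun_prop)

local notation "M32" => Matrix (Fin 3) (Fin 2) ℝ

lemma norm_le_norm_juxt_left (ξ : M32) (ζ : Fin 3 → ℝ) : ‖ξ‖ ≤ ‖juxt ξ ζ‖ :=
  (Matrix.norm_le_iff (norm_nonneg _)).2 fun i j =>
    calc ‖ξ i j‖ = ‖juxt ξ ζ i j.castSucc‖ := by
          simp only [juxt, Matrix.of_apply, Fin.lastCases_castSucc]
      _ ≤ ‖juxt ξ ζ‖ := Matrix.norm_entry_le_entrywise_sup_norm _

lemma norm_le_norm_juxt_right (ξ : M32) (ζ : Fin 3 → ℝ) : ‖ζ‖ ≤ ‖juxt ξ ζ‖ :=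
  (pi_norm_le_iff_of_nonneg (norm_nonneg _)).2 fun i =>
    calc ‖ζ i‖ = ‖juxt ξ ζ i (Fin.last 2)‖ := by
          simp only [juxt, Matrix.of_apply, Fin.lastCases_last]
      _ ≤ ‖juxt ξ ζ‖ := Matrix.norm_entry_le_entrywise_sup_norm _

lemma continuous_juxt : Continuous fun q : M32 × (Fin 3 → ℝ) => juxt q.1 q.2 := by
  refine continuous_pi fun i => continuous_pi fun k => ?_
  induction k using Fin.lastCases with
  | last =>
    simp only [juxt, Matrix.of_apply, Fin.lastCases_last]
    fun_prop
  | cast j =>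
    simp only [juxt, Matrix.of_apply, Fin.lastCases_castSucc]
    fun_prop

section W0

variable {W : Matrix (Fin 3) (Fin 3) ℝ → ℝ≥0∞} {p C : ℝ}

lemma coercive_W0 (hp : 0 < p) (hC : 0 < C) (hWcoer : Coercive p C W) : Coercive p C (W0 W) :=
  fun ξ => le_iInf fun ζ =>
    (ENNReal.ofReal_le_ofReal (by gcongr; exact norm_le_norm_juxt_left ξ ζ)).trans (hWcoer _)

lemma lowerSemicontinuous_W0 (hp : 0 < p) (hC : 0 < C) (hWcont : Continuous W)
    (hWcoer : Coercive p C W) : LowerSemicontinuous (W0 W) := by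
  refine lowerSemicontinuous_iInf_of_norm_le (hWcont.comp continuous_juxt).lowerSemicontinuous
    fun y hy => ⟨(y.toReal / C) ^ p⁻¹, fun ξ ζ hζ => ?_⟩
  have h := (ENNReal.ofReal_le_iff_le_toReal hy).1 ((hWcoer _).trans hζ)
  rw [Real.le_rpow_inv_iff_of_pos (norm_nonneg _) (by positivity) hp, le_div_iff₀ hC]
  nlinarith [Real.rpow_le_rpow (norm_nonneg _) (norm_le_norm_juxt_right ξ ζ) hp.le]

end W0

lemma Rseq_succ (f : M32 → ℝ≥0∞) (i : ℕ) :
    Rseq f (i + 1) = laminateInf (Rseq f i)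
      (range fun q : (Fin 3 → ℝ) × (Fin 2 → ℝ) => Matrix.vecMulVec q.1 q.2) := by
  funext ξ
  simp only [Rseq, laminateInf, laminateEnergy, iInf_range, iInf_prod]
  exact iInf_comm

theorem Rseq_inf_attained_general
    (p C : ℝ) (hp : 1 < p) (hC : 0 < C)
    (W : Matrix (Fin 3) (Fin 3) ℝ → ℝ≥0∞)
    (hWcont : Continuous W)
    (hWcoer : ∀ F : Matrix (Fin 3) (Fin 3) ℝ, ENNReal.ofReal (C * ‖F‖ ^ p) ≤ W F)
    (i : ℕ) (ξ : Matrix (Fin 3) (Fin 2) ℝ) :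
    ∃ (a : Fin 2 → ℝ) (b : Fin 3 → ℝ) (t : ℝ), t ∈ Set.Icc (0 : ℝ) 1 ∧
      Rseq (W0 W) (i + 1) ξ =
        ENNReal.ofReal (1 - t) * Rseq (W0 W) i (ξ - t • Matrix.vecMulVec b a) +
          ENNReal.ofReal t * Rseq (W0 W) i (ξ + (1 - t) • Matrix.vecMulVec b a) := by
  have hp0 : 0 < p := by linarith
  have hRseq : ∀ j, LowerSemicontinuous (Rseq (W0 W) j) ∧ Coercive p C (Rseq (W0 W) j) := by
    intro j
    induction j with
    | zero => exact ⟨lowerSemicontinuous_W0 hp0 hC hWcont hWcoer, coercive_W0 hp0 hC hWcoer⟩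
    | succ j ih =>
      rw [Rseq_succ]
      exact ⟨lowerSemicontinuous_laminateInf ih.1 ih.2 hp hC Matrix.isClosed_range_vecMulVec,
        coercive_laminateInf ih.2 hp.le hC.le⟩
  obtain ⟨_, ⟨⟨b, a⟩, rfl⟩, t, ht, h⟩ := exists_laminateInf_eq (hRseq i).1 (hRseq i).2 hp hC
    Matrix.isClosed_range_vecMulVec ⟨_, (0, 0), rfl⟩ ξ
  exact ⟨a, b, t, ht, by rw [Rseq_succ]; exact h⟩

/-- Lemma B.3 (Ben Belgacem): for every `i ≥ 0` and every `ξ ∈ M^{3×2}` of rank 2, the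
infimum defining `R_{i+1}W₀(ξ)` is attained. -/
theorem Rseq_inf_attained
    (p C : ℝ) (hp : 1 < p) (hC : 0 < C)
    (W : Matrix (Fin 3) (Fin 3) ℝ → ℝ≥0∞)
    (hWcont : Continuous W)
    (hWcoer : ∀ F : Matrix (Fin 3) (Fin 3) ℝ, ENNReal.ofReal (C * ‖F‖ ^ p) ≤ W F)
    (hNim : ∀ F : Matrix (Fin 3) (Fin 3) ℝ, W F = ⊤ ↔ F.det ≤ 0)
    (hIcv : ∀ δ : ℝ, 0 < δ → ∃ c : ℝ, 0 < c ∧ ∀ F : Matrix (Fin 3) (Fin 3) ℝ,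
      δ ≤ F.det → W F ≤ ENNReal.ofReal (c * (1 + ‖F‖ ^ p)))
    (i : ℕ) (ξ : Matrix (Fin 3) (Fin 2) ℝ) (hξ : ξ.rank = 2) :
    ∃ (a : Fin 2 → ℝ) (b : Fin 3 → ℝ) (t : ℝ), t ∈ Set.Icc (0 : ℝ) 1 ∧
      Rseq (W0 W) (i + 1) ξ =
        ENNReal.ofReal (1 - t) * Rseq (W0 W) i (ξ - t • Matrix.vecMulVec b a) +
          ENNReal.ofReal t * Rseq (W0 W) i (ξ + (1 - t) • Matrix.vecMulVec b a) :=
  Rseq_inf_attained_general p C hp hC W hWcont hWcoer i ξ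
end
end
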